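/- arXiv:2504.02046 — 8 statements merged into one kernel-verified Lean document; each statement's English description precedes it below -/
import Mathlib

section
/- Let q be a power of an odd prime with q ≥ 5, let m ≥ 2 be an integer that does not divide q−1 and such that every prime factor of m divides q−1 and, if 4 divides m, then 4 divides q−1. Let l = ord_m(q) be the multiplicative order of q modulo m. Then: (i) l divides m, and setting k = m/l, k divides q−1; (ii) l is coprime with (q−1)/k; and (iii) the cyclic subgroup generated by the residue class of q in the group (ℤ/mℤ)^* of units modulo m equals the set {(ik+1) mod m : i = 0, 1, …, l−1}. -/
/-!
Let `g = gcd(m, q - 1)`. For a prime `p ∣ m` we have `p ∣ q - 1`, and lifting the exponent gives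
`v_p(q^n - 1) = v_p(q - 1) + v_p(n)` whenever `v_p(m) > v_p(q - 1)` (for `p = 2` this forces
`4 ∣ m`, hence `4 ∣ q - 1`, which is what LTE needs at `2`). Comparing valuations prime by prime,
`m ∣ q^n - 1 ↔ m / g ∣ n`, so `ord_m(q) = m / g` and `k = g`; coprimality is that of `m / g` and
`(q - 1) / g`. Every power of `q` is `≡ 1 (mod k)`, hence one of the `l` residues `ik + 1 mod m`,
and as `q` has exactly `l` distinct powers they exhaust these residues.
-/

theorem padicValNat_two_pow_sub_one {q n : ℕ} (hq : 1 < q) (h4 : 4 ∣ q - 1) (hn : n ≠ 0) :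
    padicValNat 2 (q ^ n - 1) = padicValNat 2 (q - 1) + padicValNat 2 n := by
  have hqn : 1 < q ^ n := Nat.one_lt_pow hn hq
  rw [← Nat.cast_inj (R := ℕ∞), Nat.cast_add]
  iterate 3 rw [padicValNat_eq_emultiplicity (by omega)]
  iterate 3 rw [← Int.natCast_emultiplicity]
  push_cast [Nat.cast_sub hq.le, Nat.cast_sub hqn.le]
  rw [← one_pow (M := ℤ) n, Int.two_pow_sub_pow' n, one_pow]
  · have h4' := Int.natCast_dvd_natCast.mpr h4
    push_cast [Nat.cast_sub hq.le] at h4'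
    exact h4'
  · exact_mod_cast (by omega : ¬ 2 ∣ q)

theorem Nat.factorization_pow_sub_one {p q n : ℕ} (hp : p.Prime) (hq : 1 < q) (hpq : p ∣ q - 1)
    (h4 : p = 2 → 4 ∣ q - 1) (hn : n ≠ 0) :
    (q ^ n - 1).factorization p = (q - 1).factorization p + n.factorization p := by
  simp only [Nat.factorization_def _ hp]
  rcases hp.eq_two_or_odd' with rfl | hodd
  · exact padicValNat_two_pow_sub_one hq (h4 rfl) hn
  · have hpq' : ¬p ∣ q := fun h => hp.one_lt.ne'
      (Nat.dvd_one.mp (by simpa [Nat.sub_sub_self hq.le] using Nat.dvd_sub h hpq))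
    have := Fact.mk hp
    simpa using padicValNat.pow_sub_pow hodd hq (by simpa using hpq) hpq' hn

theorem Nat.factorization_div_gcd {m n : ℕ} (hm : m ≠ 0) (hn : n ≠ 0) (p : ℕ) :
    (m / m.gcd n).factorization p = m.factorization p - n.factorization p := by
  rw [Nat.factorization_div (Nat.gcd_dvd_left m n), Nat.factorization_gcd hm hn,
    Finsupp.tsub_apply, Finsupp.inf_apply]
  omega

theorem factorization_le_pow_sub_one_iff {p q m n : ℕ} (hp : p.Prime) (hq : 1 < q) (hm : m ≠ 0)
    (hpq : p ∣ m → p ∣ q - 1) (h4 : 4 ∣ m → 4 ∣ q - 1) (hn : n ≠ 0) :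
    m.factorization p ≤ (q ^ n - 1).factorization p ↔
      (m / m.gcd (q - 1)).factorization p ≤ n.factorization p := by
  have hq1 : q - 1 ≠ 0 := by omega
  have hqn : q ^ n - 1 ≠ 0 := by have := Nat.one_lt_pow hn hq; omega
  rw [Nat.factorization_div_gcd hm hq1]
  rcases le_or_gt (m.factorization p) ((q - 1).factorization p) with hle | hlt
  · have := (Nat.factorization_le_iff_dvd hq1 hqn).mpr (Nat.sub_one_dvd_pow_sub_one q n) p
    omega
  · have hpm : p ∣ m := Nat.dvd_of_factorization_pos (by omega)
    have hb := hp.factorization_pos_of_dvd hq1 (hpq hpm)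
    have h4' : p = 2 → 4 ∣ q - 1 := by
      rintro rfl
      exact h4 ((Nat.prime_two.pow_dvd_iff_le_factorization hm (k := 2)).mpr (by omega))
    rw [Nat.factorization_pow_sub_one hp hq (hpq hpm) h4' hn]
    omega

theorem dvd_pow_sub_one_iff_div_gcd_dvd {q m : ℕ} (hq : 1 < q) (hm : m ≠ 0)
    (hpq : ∀ p : ℕ, p.Prime → p ∣ m → p ∣ q - 1) (h4 : 4 ∣ m → 4 ∣ q - 1) (n : ℕ) :
    m ∣ q ^ n - 1 ↔ m / m.gcd (q - 1) ∣ n := by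
  rcases eq_or_ne n 0 with rfl | hn
  · simp
  have hqn : q ^ n - 1 ≠ 0 := by have := Nat.one_lt_pow hn hq; omega
  have hk : m / m.gcd (q - 1) ≠ 0 :=
    (Nat.div_pos (Nat.gcd_le_left _ (by omega)) (Nat.gcd_pos_of_pos_left _ (by omega))).ne'
  rw [← Nat.factorization_prime_le_iff_dvd hm hqn, ← Nat.factorization_prime_le_iff_dvd hk hn]
  exact forall₂_congr fun p hp =>
    factorization_le_pow_sub_one_iff hp hq hm (hpq p hp) h4 hn

theorem ZMod.natCast_eq_one_iff_dvd_sub_one {a : ℕ} (ha : 1 ≤ a) (m : ℕ) :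
    (a : ZMod m) = 1 ↔ m ∣ a - 1 := by
  rw [← ZMod.natCast_eq_zero_iff, Nat.cast_sub ha, Nat.cast_one, sub_eq_zero]

theorem orderOf_natCast_eq_div_gcd {q m : ℕ} (hq : 1 < q) (hm : m ≠ 0)
    (hpq : ∀ p : ℕ, p.Prime → p ∣ m → p ∣ q - 1) (h4 : 4 ∣ m → 4 ∣ q - 1) :
    orderOf (q : ZMod m) = m / m.gcd (q - 1) :=
  Nat.dvd_right_iff_eq.mp fun n => by
    rw [orderOf_dvd_iff_pow_eq_one, ← Nat.cast_pow,
      ZMod.natCast_eq_one_iff_dvd_sub_one (Nat.one_le_pow _ _ (by omega)),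
      dvd_pow_sub_one_iff_div_gcd_dvd hq hm hpq h4]

theorem mem_powers_natCast_iff {q m l : ℕ} (hq : 1 ≤ q) (hm : m ≠ 0) (hlm : l ∣ m)
    (hord : orderOf (q : ZMod m) = l) (hk : m / l ∣ q - 1) (x : ZMod m) :
    x ∈ Submonoid.powers (q : ZMod m) ↔ ∃ i < l, x = ((i * (m / l) + 1 : ℕ) : ZMod m) := by
  classical
  set k := m / l
  have hkl : k * l = m := Nat.div_mul_cancel hlm
  have hl : 0 < l := Nat.pos_of_dvd_of_pos hlm (by omega)
  have hpow : ∀ j, ∃ i < l, (q : ZMod m) ^ j = ((i * k + 1 : ℕ) : ZMod m) := by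
    intro j
    obtain ⟨t, ht⟩ := hk.trans (Nat.sub_one_dvd_pow_sub_one q j)
    have hqj : q ^ j = k * t + 1 := by have := Nat.one_le_pow j q hq; omega
    refine ⟨t % l, Nat.mod_lt t hl, ?_⟩
    rw [← Nat.cast_pow, hqj, Nat.cast_add, Nat.cast_add, ← ZMod.natCast_mod (k * t), ← hkl,
      Nat.mul_mod_mul_left, Nat.mul_comm k (t % l)]
  have hcard : ((Finset.range l).image ((q : ZMod m) ^ ·)).card = l := by
    have hinj := pow_injOn_Iio_orderOf (x := (q : ZMod m))
    rw [hord] at hinj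
    rw [Finset.card_image_of_injOn (by simpa using hinj), Finset.card_range]
  have hpowers : (Finset.range l).image ((q : ZMod m) ^ ·) =
      (Finset.range l).image fun i => ((i * k + 1 : ℕ) : ZMod m) := by
    refine Finset.eq_of_subset_of_card_le ?_
      ((Finset.card_image_le.trans (Finset.card_range l).le).trans hcard.ge)
    simp only [Finset.image_subset_iff, Finset.mem_image, Finset.mem_range]
    intro j _
    obtain ⟨i, hi, h⟩ := hpow j
    exact ⟨i, hi, h.symm⟩
  rw [(orderOf_pos_iff.mp (hord ▸ hl)).mem_powers_iff_mem_range_orderOf, hord, hpowers]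
  simp only [Finset.mem_image, Finset.mem_range, eq_comm]

theorem order_divisor_decomposition_general
    (q m : ℕ)
    (hq5 : 5 ≤ q)
    (hm2 : 2 ≤ m)
    (hprime : ∀ p : ℕ, p.Prime → p ∣ m → p ∣ (q - 1))
    (h4 : 4 ∣ m → 4 ∣ (q - 1))
    (l : ℕ) (hl : l = orderOf ((q : ZMod m))) :
    l ∣ m ∧ (m / l) ∣ (q - 1) ∧ Nat.Coprime ((q - 1) / (m / l)) l ∧
      ∀ x : ZMod m, x ∈ Submonoid.powers ((q : ZMod m)) ↔
        ∃ i < l, x = ((i * (m / l) + 1 : ℕ) : ZMod m) := by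
  have hm : m ≠ 0 := by omega
  have hg : m.gcd (q - 1) ∣ m := Nat.gcd_dvd_left m (q - 1)
  have hl_eq : l = m / m.gcd (q - 1) :=
    hl.trans (orderOf_natCast_eq_div_gcd (by omega) hm hprime h4)
  have hk : m / l = m.gcd (q - 1) := by rw [hl_eq, Nat.div_div_self hg hm]
  have hlm : l ∣ m := hl_eq ▸ Nat.div_dvd_of_dvd hg
  have hkq : m / l ∣ q - 1 := hk ▸ Nat.gcd_dvd_right m (q - 1)
  refine ⟨hlm, hkq, ?_, mem_powers_natCast_iff (by omega) hm hlm hl.symm hkq⟩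
  rw [hk, hl_eq]
  exact (Nat.coprime_div_gcd_div_gcd (Nat.gcd_pos_of_pos_left _ (by omega))).symm

/-- Lemma 2: with `l = ord_m q` and `k = m / l`, we have `l ∣ m`, `k ∣ q - 1`,
`gcd((q-1)/k, l) = 1`, and the cyclic subgroup generated by `q` in `(ℤ/mℤ)ˣ`
equals `{(ik + 1) mod m : i = 0, …, l - 1}`. -/
theorem order_divisor_decomposition
    (q m : ℕ)
    (hodd : ∃ p n : ℕ, p.Prime ∧ Odd p ∧ q = p ^ n)
    (hq5 : 5 ≤ q)
    (hm2 : 2 ≤ m)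
    (hmndvd : ¬ m ∣ (q - 1))
    (hprime : ∀ p : ℕ, p.Prime → p ∣ m → p ∣ (q - 1))
    (h4 : 4 ∣ m → 4 ∣ (q - 1))
    (l : ℕ) (hl : l = orderOf ((q : ZMod m))) :
    l ∣ m ∧ (m / l) ∣ (q - 1) ∧ Nat.Coprime ((q - 1) / (m / l)) l ∧
      ∀ x : ZMod m, x ∈ Submonoid.powers ((q : ZMod m)) ↔
        ∃ i < l, x = ((i * (m / l) + 1 : ℕ) : ZMod m) :=
  order_divisor_decomposition_general q m hq5 hm2 hprime h4 l hl
end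

section
/- Let q be a power of an odd prime with q ≥ 5, let m ≥ 2 be an integer that does not divide q−1 and such that every prime factor of m divides q−1 and, if 4 divides m, then 4 divides q−1. Let l = ord_m(q), assume l divides m and set k = m/l, and let t = (q^l − 1)/m (an integer since q^l ≡ 1 (mod m)). Let a ∈ F_q be an element of multiplicative order e = ∏_{p prime, p ∣ m} p^{v_p(q−1)}. Then the multiplicative order of a^t in the group F_q^* equals k. -/
/-!
Since `orderOf (a ^ t) = e / gcd e t`, it suffices to compare `p`-adic valuations at the primes
`p ∣ m`, where `v_p(e) = v_p(q - 1)`. From `m t = q^l - 1` and lifting the exponent,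
`v_p(t) = v_p(q - 1) + v_p(l) - v_p(m)` whenever `v_p(l) < v_p(m)`; at `p = 2` this needs
`4 ∣ q - 1` or `l` odd, and if `4 ∤ m` then `v_2(l) < v_2(m) ≤ 1` makes `l` odd. When
`v_p(l) = v_p(m)` the inequality `v_p(q^l - 1) ≥ v_p(q - 1) + v_p(l)` gives
`v_p(t) ≥ v_p(q - 1)`. In both cases `min (v_p e) (v_p t) = v_p(e) - v_p(m / l)`.
-/

open Finset

section LiftingTheExponent

variable {p q n : ℕ} [hp : Fact p.Prime]

theorem padicValNat.pow_sub_one_of_not_dvd (hq : 1 < q) (hpq : p ∣ q - 1) (hpn : ¬p ∣ n) :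
    padicValNat p (q ^ n - 1) = padicValNat p (q - 1) := by
  have hq1 : (q : ZMod p) = 1 := by
    have := (ZMod.natCast_eq_zero_iff _ _).2 hpq
    rwa [Nat.cast_sub hq.le, Nat.cast_one, sub_eq_zero] at this
  -- the geometric sum is `≡ n ≢ 0 (mod p)`
  have hsum : ¬p ∣ ∑ i ∈ range n, q ^ i := by
    rw [← ZMod.natCast_eq_zero_iff]
    push_cast [hq1]
    simpa [ZMod.natCast_eq_zero_iff] using hpn
  rw [← geom_sum_mul_of_one_le hq.le,
    padicValNat.mul (by rintro h; simp [h] at hsum) (by omega),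
    padicValNat.eq_zero_of_not_dvd hsum, zero_add]

theorem padicValNat.pow_sub_one (hq : 1 < q) (hpq : p ∣ q - 1) (hn : n ≠ 0)
    (h2 : p = 2 → 4 ∣ q - 1 ∨ ¬2 ∣ n) :
    padicValNat p (q ^ n - 1) = padicValNat p (q - 1) + padicValNat p n := by
  rcases eq_or_ne p 2 with rfl | hp2
  · by_cases hn2 : 2 ∣ n
    · have h4 := (h2 rfl).resolve_right (not_not.2 hn2)
      have hlte := padicValNat.pow_two_sub_one hq (by omega) hn (even_iff_two_dvd.2 hn2)
      have hv : padicValNat 2 (q + 1) = 1 := by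
        have h1 : 1 ≤ padicValNat 2 (q + 1) := one_le_padicValNat_of_dvd (by omega) (by omega)
        have h2 : ¬2 ≤ padicValNat 2 (q + 1) := fun h =>
          absurd ((padicValNat_dvd_iff_le (by omega)).2 h) (by omega)
        omega
      omega
    · rw [padicValNat.pow_sub_one_of_not_dvd hq hpq hn2, padicValNat.eq_zero_of_not_dvd hn2,
        add_zero]
  · have hpq' : ¬p ∣ q := fun h => hp.out.one_lt.ne'
      (Nat.dvd_one.1 (by simpa [Nat.sub_sub_self hq.le] using Nat.dvd_sub h hpq))
    simpa using padicValNat.pow_sub_pow (hp.out.odd_of_ne_two hp2) hq (by simpa using hpq) hpq' hn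

theorem padicValNat.sub_one_add_le_pow_sub_one (hq : 1 < q) (hpq : p ∣ q - 1) (hn : n ≠ 0) :
    padicValNat p (q - 1) + padicValNat p n ≤ padicValNat p (q ^ n - 1) := by
  by_cases h : p = 2 ∧ 2 ∣ n
  · obtain ⟨rfl, hn2⟩ := h
    have hlte := padicValNat.pow_two_sub_one hq (by omega) hn (even_iff_two_dvd.2 hn2)
    have hq1 : 1 ≤ padicValNat 2 (q + 1) := one_le_padicValNat_of_dvd (by omega) (by omega)
    omega
  · exact (padicValNat.pow_sub_one hq hpq hn fun hp2 => Or.inr fun hn2 => h ⟨hp2, hn2⟩).ge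

end LiftingTheExponent

theorem dvd_pow_sub_one_of_natCast_pow_eq_one {q m n : ℕ} (hq : 0 < q)
    (h : (q : ZMod m) ^ n = 1) : m ∣ q ^ n - 1 :=
  (Nat.modEq_iff_dvd' (Nat.one_le_pow _ _ hq)).1
    ((ZMod.natCast_eq_natCast_iff _ _ _).1 (by push_cast; exact h.symm))

theorem Nat.factorization_prod_primeFactors_pow (m : ℕ) (f : ℕ → ℕ) (p : ℕ) :
    (∏ r ∈ m.primeFactors, r ^ f r).factorization p =
      if p ∈ m.primeFactors then f p else 0 := by
  rw [Nat.factorization_prod fun r hr =>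
      pow_ne_zero _ (Nat.prime_of_mem_primeFactors hr).ne_zero,
    Finsupp.finsetSum_apply, sum_congr rfl fun r hr => by
      rw [(Nat.prime_of_mem_primeFactors hr).factorization_pow, Finsupp.single_apply]]
  exact sum_ite_eq' _ _ _

theorem Nat.div_gcd_eq_of_factorization {e t k : ℕ} (he : e ≠ 0) (ht : t ≠ 0) (hk : k ≠ 0)
    (h : ∀ p,
      k.factorization p + min (e.factorization p) (t.factorization p) = e.factorization p) :
    e / e.gcd t = k := by
  have hg : e.gcd t ≠ 0 := Nat.gcd_ne_zero_left he
  refine Nat.div_eq_of_eq_mul_left (Nat.pos_of_ne_zero hg)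
    (Nat.eq_of_factorization_eq he (mul_ne_zero hk hg) fun p => ?_)
  rw [Nat.factorization_mul hk hg, Nat.factorization_gcd he ht, Finsupp.add_apply,
    Finsupp.inf_apply]
  exact (h p).symm

theorem factorization_div_add_min_eq_factorization_sub_one {p q m l t : ℕ} (hp : p.Prime)
    (hq : 1 < q) (hpq : p ∣ q - 1) (h4 : 4 ∣ m → 4 ∣ q - 1) (hl : l ≠ 0) (hlm : l ∣ m)
    (hm : m ≠ 0) (ht : t ≠ 0) (hmt : m * t = q ^ l - 1) :
    (m / l).factorization p + min ((q - 1).factorization p) (t.factorization p) =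
      (q - 1).factorization p := by
  have := Fact.mk hp
  have hval : m.factorization p + t.factorization p = (q ^ l - 1).factorization p := by
    rw [← hmt, Nat.factorization_mul hm ht, Finsupp.add_apply]
  have hle : l.factorization p ≤ m.factorization p :=
    (Nat.factorization_le_iff_dvd hl hm).2 hlm p
  have hdiv : (m / l).factorization p = m.factorization p - l.factorization p := by
    rw [Nat.factorization_div hlm, Finsupp.tsub_apply]
  have hge : (q - 1).factorization p + l.factorization p ≤ (q ^ l - 1).factorization p := by
    simpa only [Nat.factorization_def _ hp] using padicValNat.sub_one_add_le_pow_sub_one hq hpq hl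
  have heq : l.factorization p < m.factorization p →
      (q ^ l - 1).factorization p = (q - 1).factorization p + l.factorization p := by
    intro hlt
    simp only [Nat.factorization_def _ hp]
    refine padicValNat.pow_sub_one hq hpq hl fun hp2 => ?_
    subst hp2
    by_cases h4m : 4 ∣ m
    · exact Or.inl (h4 h4m)
    · refine Or.inr fun h2l => h4m ?_
      have h2l' := (hp.pow_dvd_iff_le_factorization (k := 1) hl).1 (by simpa using h2l)
      exact (hp.pow_dvd_iff_le_factorization (k := 2) hm).2 (by omega)
  omega

theorem order_of_a_pow_t_general
    (F : Type*) [Field F] (q m : ℕ)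
    (hq5 : 5 ≤ q)
    (hm2 : 2 ≤ m)
    (hprime : ∀ p : ℕ, p.Prime → p ∣ m → p ∣ (q - 1))
    (h4 : 4 ∣ m → 4 ∣ (q - 1))
    (l k t : ℕ)
    (hl : l = orderOf ((q : ZMod m)))
    (hldvd : l ∣ m)
    (hk : k = m / l)
    (ht : t = (q ^ l - 1) / m)
    (a : F)
    (ha : orderOf a = ∏ p ∈ m.primeFactors, p ^ (q - 1).factorization p) :
    orderOf (a ^ t) = k := by
  have hm0 : m ≠ 0 := by omega
  have hl0 : l ≠ 0 := by rintro rfl; exact hm0 (Nat.eq_zero_of_zero_dvd hldvd)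
  have hmt : m * t = q ^ l - 1 :=
    ht ▸ Nat.mul_div_cancel' (dvd_pow_sub_one_of_natCast_pow_eq_one (by omega)
      (hl ▸ pow_orderOf_eq_one _))
  have ht0 : t ≠ 0 := by
    rintro rfl
    have := Nat.one_lt_pow hl0 (by omega : 1 < q)
    omega
  have hk0 : k ≠ 0 := hk ▸ (Nat.div_pos (Nat.le_of_dvd (by omega) hldvd) (by omega)).ne'
  rw [orderOf_pow' a ht0, ha]
  refine Nat.div_gcd_eq_of_factorization (prod_ne_zero_iff.2 fun r hr =>
    pow_ne_zero _ (Nat.prime_of_mem_primeFactors hr).ne_zero) ht0 hk0 fun p => ?_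
  rw [Nat.factorization_prod_primeFactors_pow, hk]
  split_ifs with hpm
  · obtain ⟨hp, hpm, -⟩ := Nat.mem_primeFactors.1 hpm
    exact factorization_div_add_min_eq_factorization_sub_one hp (by omega) (hprime p hp hpm) h4
      hl0 hldvd hm0 ht0 hmt
  · have hpk : p ∉ (m / l).primeFactors := fun h =>
      hpm (Nat.primeFactors_mono (Nat.div_dvd_of_dvd hldvd) hm0 h)
    have hkp : (m / l).factorization p = 0 :=
      Finsupp.notMem_support_iff.1 (by rwa [Nat.support_factorization])
    simp [hkp]

/-- Lemma 3: with `l = ord_m q`, `k = m / l` and `t = (q^l - 1)/m`, the element `a^t`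
has multiplicative order exactly `k` in `F_q^*`. -/
theorem order_of_a_pow_t
    (F : Type*) [Field F] [Fintype F] (q m : ℕ)
    (hq : Fintype.card F = q)
    (hodd : ∃ p n : ℕ, p.Prime ∧ Odd p ∧ q = p ^ n)
    (hq5 : 5 ≤ q)
    (hm2 : 2 ≤ m)
    (hmndvd : ¬ m ∣ (q - 1))
    (hprime : ∀ p : ℕ, p.Prime → p ∣ m → p ∣ (q - 1))
    (h4 : 4 ∣ m → 4 ∣ (q - 1))
    (l k t : ℕ)
    (hl : l = orderOf ((q : ZMod m)))
    (hldvd : l ∣ m)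
    (hk : k = m / l)
    (ht : t = (q ^ l - 1) / m)
    (a : F)
    (ha : orderOf a = ∏ p ∈ m.primeFactors, p ^ (q - 1).factorization p) :
    orderOf (a ^ t) = k :=
  order_of_a_pow_t_general F q m hq5 hm2 hprime h4 l k t hl hldvd hk ht a ha
end

section
/- Let k ≥ 2 and l ≥ 2 be integers, and let d_0 < d_1 < … < d_r (with 1 ≤ r ≤ l−1) be elements of the set {ik+1 : i = 0, 1, …, l−1}. Then for any positive integers u_0, u_1, …, u_r with u_0 ≤ k and any non-negative integer v_0, the equality u_0·d_0 = v_0·d_0 + u_1·d_1 + … + u_r·d_r does not hold. -/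
/-- Lemma 6: for numbers `d_0 < d_1 < … < d_r` from `{ik+1 : i = 0, …, l-1}`,
positive integers `u_0, …, u_r` with `u_0 ≤ k` and a non-negative integer `v_0`,
the equality `u_0·d_0 = v_0·d_0 + u_1·d_1 + … + u_r·d_r` cannot hold. -/
theorem no_degree_collision
    (k l r : ℕ) (hk : 2 ≤ k) (hl : 2 ≤ l) (hr1 : 1 ≤ r) (hr2 : r ≤ l - 1)
    (d : Fin (r + 1) → ℕ) (hmono : StrictMono d)
    (hd : ∀ s : Fin (r + 1), ∃ i < l, d s = i * k + 1)
    (u : Fin (r + 1) → ℕ) (hu : ∀ s : Fin (r + 1), 0 < u s) (hu0 : u 0 ≤ k)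
    (v₀ : ℕ) :
    u 0 * d 0 ≠ v₀ * d 0 + ∑ s ∈ Finset.univ.erase (0 : Fin (r + 1)), u s * d s := by
  intro heq
  set E := Finset.univ.erase (0 : Fin (r + 1)) with hE
  have hd0pos : 1 ≤ d 0 := by obtain ⟨i, _, hi⟩ := hd 0; omega
  have hds : ∀ s ∈ E, d 0 + 1 ≤ d s := by
    intro s hs
    have hne : s ≠ 0 := (Finset.mem_erase.mp hs).1
    have h0 : (0 : Fin (r + 1)) < s := Fin.pos_of_ne_zero hne
    exact hmono h0
  have hE1 : (1 : Fin (r + 1)) ∈ E := by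
    refine Finset.mem_erase.mpr ⟨?_, Finset.mem_univ _⟩
    have : ((1 : Fin (r + 1)) : ℕ) = 1 := by
      simp [Fin.val_one', Nat.mod_eq_of_lt (by omega : 1 < r + 1)]
    intro h
    rw [h] at this
    simp at this
  have hsU : 1 ≤ ∑ s ∈ E, u s :=
    le_trans (hu 1) (Finset.single_le_sum (fun s _ => Nat.zero_le _) hE1)
  set S := v₀ + ∑ s ∈ E, u s with hS
  have hsum : ∑ s ∈ E, (u s * d 0 + u s) ≤ ∑ s ∈ E, u s * d s := by
    apply Finset.sum_le_sum
    intro s hs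
    calc u s * d 0 + u s = u s * (d 0 + 1) := by ring
    _ ≤ u s * d s := Nat.mul_le_mul_left _ (hds s hs)
  have hsum' : (∑ s ∈ E, u s) * d 0 + (∑ s ∈ E, u s) ≤ ∑ s ∈ E, u s * d s := by
    rw [Finset.sum_add_distrib, ← Finset.sum_mul] at hsum
    exact hsum
  have hgt : S < u 0 := by
    by_contra h
    push_neg at h
    have h1 : u 0 * d 0 ≤ S * d 0 := Nat.mul_le_mul_right _ h
    have h2 : S * d 0 = v₀ * d 0 + (∑ s ∈ E, u s) * d 0 := by rw [hS]; ring
    omega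
  -- mod k
  have hmodd : ∀ s : Fin (r + 1), u s * d s % k = u s % k := by
    intro s
    obtain ⟨i, _, hi⟩ := hd s
    have h : u s * d s = u s + u s * i * k := by rw [hi]; ring
    rw [h, Nat.add_mul_mod_self_right]
  have hmodsum : (∑ s ∈ E, u s * d s) % k = (∑ s ∈ E, u s) % k := by
    rw [Finset.sum_nat_mod, Finset.sum_congr rfl (fun s _ => hmodd s),
      ← Finset.sum_nat_mod]
  have hmod : u 0 % k = S % k := by
    have h1 : (u 0 * d 0) % k = u 0 % k := hmodd 0
    have h2 : (v₀ * d 0 + ∑ s ∈ E, u s * d s) % k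
        = (v₀ * d 0 % k + (∑ s ∈ E, u s) % k) % k := by
      rw [Nat.add_mod, hmodsum]
    obtain ⟨i, _, hi⟩ := hd 0
    have h3 : v₀ * d 0 = v₀ + v₀ * i * k := by rw [hi]; ring
    have h4 : v₀ * d 0 % k = v₀ % k := by rw [h3, Nat.add_mul_mod_self_right]
    rw [← h1, heq, h2, h4, hS]
    conv_rhs => rw [Nat.add_mod]
  have hdvd : k ∣ u 0 - S :=
    (Nat.modEq_iff_dvd' (le_of_lt hgt)).mp hmod.symm
  have hk2 : k ≤ u 0 - S := Nat.le_of_dvd (by omega) hdvd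
  omega
end

section
/- Let q be a power of an odd prime with q ≥ 5, let m ≥ 2 be an integer that does not divide q−1 and such that every prime factor of m divides q−1 and, if 4 divides m, then 4 divides q−1. Let l = ord_m(q), assume l divides m and set k = m/l. Let a ∈ F_q have multiplicative order e = ∏_{p prime, p ∣ m} p^{v_p(q−1)}, assume x^m − a is irreducible over F_q, and let θ be the image of x in F_{q^m} = F_q[x]/(x^m − a). Let S be the set of vectors e = (e_{ij})_{0 ≤ i ≤ l−1, 0 ≤ j ≤ k−1} ∈ {0,1}^{kl} satisfying ∑_{i=0}^{l−1} ∑_{j=0}^{k−1} (ik+1)·e_{ij} < m. Then for every non-zero b ∈ F_q, the multiplicative order of θ + b in F_{q^m}^* is at least the cardinality of S. -/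
/-!
Write `x = θ + b` and `q = #F`. The conjugates of `x` are
`x ^ q ^ s = a ^ (q ^ s / m) * θ ^ (q ^ s % m) + b` for `s < m`, and they are pairwise distinct.
Every prime factor of `m` divides `q - 1` (and `4 ∣ q - 1` if `4 ∣ m`), so lifting the exponent
gives `m ∣ l * (q - 1)`, i.e. `k ∣ q - 1`. Hence every residue `q ^ s % m` is `≡ 1 [MOD k]`, and
each value `i * k + 1` with `i < l` is taken by exactly `k` exponents `s < m`.

Attach to `e ∈ S` the product of the conjugates `x ^ q ^ s` over the exponents selected by `e`
(the `j`-th exponent with residue `i * k + 1` for `e i j = 1`). It is a power of `x` and equals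
`G_e(θ)`, where `G_e` is a product of binomials `b + u * X ^ (i * k + 1)` of degree `< m`; so it
suffices that `G_e` determines `e`. Look at the factors of least degree `d`: as all degrees are
`≡ 1 [MOD k]`, the coefficients of `X ^ (r * d)` for `r ≤ k` are, up to powers of `b`, the
elementary symmetric functions of their coefficients `u`, which are distinct because the
conjugates are.
-/

open Polynomial Finset

section LiftingTheExponent

theorem padicValNat_pow_sub_one {p q n : ℕ} [hp : Fact p.Prime] (hq : 1 < q) (hpq : p ∣ q - 1)
    (h2 : p = 2 → 4 ∣ q - 1) (hn : n ≠ 0) :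
    padicValNat p (q ^ n - 1) = padicValNat p (q - 1) + padicValNat p n := by
  have hpq' : ¬ p ∣ q := fun h => hp.out.not_dvd_one <| by
    simpa [Nat.sub_sub_self hq.le] using Nat.dvd_sub h hpq
  rcases hp.out.eq_two_or_odd' with rfl | hodd
  · have h4 : (4 : ℤ) ∣ (q : ℤ) - 1 := by
      have := Int.natCast_dvd_natCast.mpr (h2 rfl)
      push_cast [hq.le] at this
      exact this
    have h2q : ¬ (2 : ℤ) ∣ q := by exact_mod_cast hpq'
    have hLTE := Int.two_pow_sub_pow' n h4 h2q
    have c1 := Int.natCast_emultiplicity 2 (q ^ n - 1)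
    have c2 := Int.natCast_emultiplicity 2 (q - 1)
    have c3 := Int.natCast_emultiplicity 2 n
    push_cast [hq.le, Nat.one_le_pow _ _ (by omega : 0 < q)] at c1 c2 c3
    rw [one_pow, c1, c2, c3] at hLTE
    rw [← Nat.cast_inj (R := ℕ∞), Nat.cast_add]
    iterate 3 rw [padicValNat_eq_emultiplicity]
    · exact hLTE
    exacts [hn, by omega, Nat.sub_ne_zero_of_lt (Nat.one_lt_pow hn hq)]
  · simpa using padicValNat.pow_sub_pow hodd hq hpq hpq' hn

theorem dvd_mul_sub_one_of_dvd_pow_sub_one {q m l : ℕ} (hq : 1 < q) (hm : m ≠ 0) (hl : l ≠ 0)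
    (hprime : ∀ p : ℕ, p.Prime → p ∣ m → p ∣ q - 1) (h4 : 4 ∣ m → 4 ∣ q - 1)
    (hml : m ∣ q ^ l - 1) : m ∣ l * (q - 1) := by
  have hq1 : q - 1 ≠ 0 := by omega
  rw [← Nat.factorization_prime_le_iff_dvd hm (by positivity)]
  intro p hp
  have := Fact.mk hp
  rw [Nat.factorization_def _ hp, Nat.factorization_def _ hp, padicValNat.mul hl hq1]
  by_cases hpm : p ∣ m
  swap
  · simp [padicValNat.eq_zero_of_not_dvd hpm]
  have hpq := hprime p hp hpm
  by_cases hp2 : p = 2 ∧ ¬ 4 ∣ q - 1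
  · obtain ⟨rfl, h4q⟩ := hp2
    have hm1 : padicValNat 2 m ≤ 1 := by
      by_contra! h
      exact h4q (h4 ((pow_dvd_pow 2 h).trans pow_padicValNat_dvd))
    have := one_le_padicValNat_of_dvd hq1 hpq
    omega
  · calc padicValNat p m ≤ padicValNat p (q ^ l - 1) :=
          (padicValNat_dvd_iff_le (Nat.sub_ne_zero_of_lt (Nat.one_lt_pow hl hq))).mp
            (pow_padicValNat_dvd.trans hml)
      _ = _ := by rw [padicValNat_pow_sub_one hq hpq (by tauto) hl, add_comm]

end LiftingTheExponent

section Residues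

variable {q m l k : ℕ}

theorem pow_mod_eq_pow_mod_iff (hqm : q.Coprime m) {s t : ℕ} :
    q ^ s % m = q ^ t % m ↔ s ≡ t [MOD orderOf (q : ZMod m)] := by
  rw [← ZMod.natCast_eq_natCast_iff', Nat.cast_pow, Nat.cast_pow,
    ← ZMod.coe_unitOfCoprime q hqm, ← Units.val_pow_eq_pow_val, ← Units.val_pow_eq_pow_val,
    Units.val_inj, pow_eq_pow_iff_modEq, orderOf_units]

theorem modEq_one_of_orderOf_eq (hq : 1 < q) (hm : m ≠ 0) (hqm : q.Coprime m)
    (hprime : ∀ p : ℕ, p.Prime → p ∣ m → p ∣ q - 1) (h4 : 4 ∣ m → 4 ∣ q - 1)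
    (hl : orderOf (q : ZMod m) = l) (hlk : l * k = m) : q ≡ 1 [MOD k] := by
  have hl0 : l ≠ 0 := by rintro rfl; omega
  have hql : q ^ l ≡ 1 [MOD m] := by
    have := (pow_mod_eq_pow_mod_iff hqm (s := l) (t := 0)).mpr (by simp [hl, Nat.ModEq])
    rwa [pow_zero] at this
  have hml := dvd_mul_sub_one_of_dvd_pow_sub_one hq hm hl0 hprime h4
    ((Nat.modEq_iff_dvd' (Nat.one_le_pow _ _ (by omega))).mp hql.symm)
  rw [← hlk] at hml
  exact ((Nat.modEq_iff_dvd' hq.le).mpr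
    (Nat.dvd_of_mul_dvd_mul_left (Nat.pos_of_ne_zero hl0) hml)).symm

theorem exists_pow_mod_eq_mul_add_one (hm : 1 < m) (hqm : q.Coprime m) (hk : q ≡ 1 [MOD k])
    (hlk : l * k = m) (s : ℕ) : ∃ i < l, q ^ s % m = i * k + 1 := by
  have hr0 : q ^ s % m ≠ 0 := fun h =>
    hm.ne' ((hqm.pow_left s).symm.eq_one_of_dvd (Nat.dvd_of_mod_eq_zero h))
  have hr : q ^ s % m ≡ 1 [MOD k] :=
    ((Nat.mod_modEq _ _).of_dvd ⟨l, by rw [← hlk, mul_comm]⟩).trans (by simpa using hk.pow s)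
  obtain ⟨i, hi⟩ := (Nat.modEq_iff_dvd' (Nat.one_le_iff_ne_zero.mpr hr0)).mp hr.symm
  have hlt : i * k < l * k := by
    rw [hlk, mul_comm, ← hi]
    have := Nat.mod_lt (q ^ s) (by omega : 0 < m)
    omega
  exact ⟨i, Nat.lt_of_mul_lt_mul_right hlt, by rw [mul_comm, ← hi]; omega⟩

theorem exists_pow_mod_eq (hm : 1 < m) (hqm : q.Coprime m) (hk : q ≡ 1 [MOD k])
    (hl : orderOf (q : ZMod m) = l) (hlk : l * k = m) {i : ℕ} (hi : i < l) :
    ∃ s < l, q ^ s % m = i * k + 1 := by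
  have hsub : (range l).image (q ^ · % m) ⊆ (range l).image (· * k + 1) := by
    simp only [subset_iff, mem_image, mem_range]
    rintro _ ⟨s, -, rfl⟩
    obtain ⟨i, hi, h⟩ := exists_pow_mod_eq_mul_add_one hm hqm hk hlk s
    exact ⟨i, hi, h.symm⟩
  have hinj : Set.InjOn (q ^ · % m) (range l) := fun s hs t ht h =>
    ((pow_mod_eq_pow_mod_iff hqm).mp h).eq_of_lt_of_lt (hl ▸ mem_range.mp hs)
      (hl ▸ mem_range.mp ht)
  have heq := eq_of_subset_of_card_le hsub <| by
    rw [card_image_of_injOn hinj, card_range]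
    exact card_image_le.trans (card_range l).le
  simpa [← heq] using mem_image_of_mem (· * k + 1) (mem_range.mpr hi)

theorem exists_injective_pow_mod (hm : 1 < m) (hqm : q.Coprime m) (hk : q ≡ 1 [MOD k])
    (hl : orderOf (q : ZMod m) = l) (hlk : l * k = m) : ∃ τ : Fin l × Fin k → ℕ,
    Function.Injective τ ∧ (∀ p, τ p < m) ∧ ∀ p, q ^ τ p % m = p.1 * k + 1 := by
  choose σ hσl hσ using fun i : Fin l => exists_pow_mod_eq hm hqm hk hl hlk i.2
  have hl0 : 0 < l := Nat.pos_of_ne_zero (by rintro rfl; omega)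
  have hk0 : 0 < k := Nat.pos_of_ne_zero (by rintro rfl; omega)
  refine ⟨fun p => σ p.1 + p.2 * l, fun p p' h => ?_, fun p => ?_, fun p => ?_⟩
  · have hσeq : σ p.1 = σ p'.1 := by
      simpa [Nat.add_mul_mod_self_right, Nat.mod_eq_of_lt (hσl _)] using congrArg (· % l) h
    have h1 : p.1 = p'.1 := Fin.ext <| Nat.eq_of_mul_eq_mul_right hk0 <| by
      have := hσ p'.1
      rw [← hσeq, hσ p.1] at this
      omega
    have h2 : p.2 = p'.2 := Fin.ext <| Nat.eq_of_mul_eq_mul_right hl0 <| by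
      simp only [hσeq] at h
      omega
    exact Prod.ext h1 h2
  · nlinarith [hσl p.1, p.2.2]
  · rw [← hσ, pow_mod_eq_pow_mod_iff hqm, hl]
    exact Nat.add_mul_mod_self_right _ _ _

end Residues

section BinomialProducts

variable {ι : Type*}

theorem card_eq_and_forall_eq_of_sum_eq {t : Finset ι} {c : ι → ℕ} {d k r : ℕ} (hd : 0 < d)
    (hdk : d ≡ 1 [MOD k]) (hck : ∀ i ∈ t, c i ≡ 1 [MOD k]) (hdc : ∀ i ∈ t, d ≤ c i)
    (hrk : r ≤ k) (hsum : ∑ i ∈ t, c i = r * d) : #t = r ∧ ∀ i ∈ t, c i = d := by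
  have hcard_le : #t ≤ r :=
    Nat.le_of_mul_le_mul_right ((card_nsmul_le_sum t c d hdc).trans hsum.le) hd
  have hmod : #t ≡ r [MOD k] := calc
    #t = ∑ _i ∈ t, 1 := by simp
    _ ≡ ∑ i ∈ t, c i [MOD k] := Nat.ModEq.sum fun i hi => (hck i hi).symm
    _ = r * d := hsum
    _ ≡ r * 1 [MOD k] := hdk.mul_left r
    _ = r := mul_one r
  have hcard : #t = r := by
    by_contra hne
    have hk_le : k ≤ r - #t := Nat.le_of_dvd (by omega) ((Nat.modEq_iff_dvd' hcard_le).mp hmod)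
    have ht : t = ∅ := card_eq_zero.mp (by omega)
    simp only [ht, sum_empty] at hsum
    rcases Nat.mul_eq_zero.mp hsum.symm with h | h <;> omega
  refine ⟨hcard, fun i hi => ((sum_eq_sum_iff_of_le hdc).mp ?_ i hi).symm⟩
  rw [sum_const, smul_eq_mul, hcard, hsum]

variable {R : Type*} [CommSemiring R]

theorem Polynomial.coeff_prod_one_add_C_mul_X_pow (s : Finset ι) (c : ι → ℕ) (v : ι → R)
    (n : ℕ) :
    (∏ i ∈ s, (1 + C (v i) * X ^ c i)).coeff n =
      ∑ t ∈ s.powerset with ∑ i ∈ t, c i = n, ∏ i ∈ t, v i := by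
  rw [prod_one_add, finsetSum_coeff, sum_filter]
  refine sum_congr rfl fun t _ => ?_
  rw [prod_mul_distrib, ← map_prod, prod_pow_eq_pow_sum, coeff_C_mul_X_pow]
  exact if_congr eq_comm rfl rfl

theorem Polynomial.natDegree_prod_one_add_C_mul_X_pow_le (s : Finset ι) (c : ι → ℕ)
    (v : ι → R) :
    (∏ i ∈ s, (1 + C (v i) * X ^ c i)).natDegree ≤ ∑ i ∈ s, c i :=
  (natDegree_prod_le _ _).trans <| sum_le_sum fun i _ =>
    (natDegree_add_le _ _).trans <| max_le (by simp) (natDegree_C_mul_X_pow_le _ _)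

theorem Polynomial.coeff_prod_one_add_C_mul_X_pow_mul {s : Finset ι} {c : ι → ℕ} (v : ι → R)
    {d k r : ℕ} (hd : 0 < d) (hdk : d ≡ 1 [MOD k]) (hck : ∀ i ∈ s, c i ≡ 1 [MOD k])
    (hdc : ∀ i ∈ s, d ≤ c i) (hrk : r ≤ k) :
    (∏ i ∈ s, (1 + C (v i) * X ^ c i)).coeff (r * d) =
      (∏ i ∈ s with c i = d, (1 + C (v i) * X)).coeff r := by
  have hrow := coeff_prod_one_add_C_mul_X_pow {i ∈ s | c i = d} (fun _ => 1) v r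
  simp only [pow_one] at hrow
  rw [hrow, coeff_prod_one_add_C_mul_X_pow]
  congr 1
  ext t
  simp only [mem_filter, mem_powerset, sum_const, smul_eq_mul, mul_one]
  constructor
  · rintro ⟨hts, hsum⟩
    obtain ⟨hcard, hcd⟩ := card_eq_and_forall_eq_of_sum_eq hd hdk (fun i hi => hck i (hts hi))
      (fun i hi => hdc i (hts hi)) hrk hsum
    exact ⟨fun i hi => mem_filter.mpr ⟨hts hi, hcd i hi⟩, hcard⟩
  · rintro ⟨hts, hcard⟩
    refine ⟨fun i hi => (mem_filter.mp (hts hi)).1, ?_⟩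
    rw [sum_congr rfl fun i hi => (mem_filter.mp (hts hi)).2, sum_const, smul_eq_mul, hcard]

variable {F : Type*} [Field F]

theorem Polynomial.eq_of_prod_one_add_C_mul_X_eq [DecidableEq ι] {v : ι → F} {A B : Finset ι}
    (hv : ∀ i ∈ A ∪ B, v i ≠ 0) (hinj : Set.InjOn v ↑(A ∪ B))
    (h : ∏ i ∈ A, (1 + C (v i) * X) = ∏ i ∈ B, (1 + C (v i) * X)) : A = B := by
  have key {A' B' : Finset ι} (hA' : A' ⊆ A ∪ B) (hB' : B' ⊆ A ∪ B)
      (h' : ∏ i ∈ A', (1 + C (v i) * X) = ∏ i ∈ B', (1 + C (v i) * X)) : A' ⊆ B' := by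
    intro j hj
    have hroot : (∏ i ∈ B', (1 + C (v i) * X)).eval (-(v j)⁻¹) = 0 := by
      rw [← h', eval_prod]
      exact prod_eq_zero hj (by simp [hv j (hA' hj)])
    rw [eval_prod] at hroot
    obtain ⟨i, hi, hi0⟩ := prod_eq_zero_iff.mp hroot
    have hvij : v i = v j := by
      simp only [eval_add, eval_one, eval_mul, eval_C, eval_X] at hi0
      field_simp [hv j (hA' hj)] at hi0
      linear_combination -hi0
    rwa [hinj (hA' hj) (hB' hi) hvij.symm]
  exact (key subset_union_left subset_union_right h).antisymm
    (key subset_union_right subset_union_left h.symm)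

theorem Polynomial.filter_eq_of_prod_one_add_C_mul_X_pow_eq [Fintype ι] [DecidableEq ι]
    {c : ι → ℕ} {v : ι → F} {k d : ℕ} (hv : ∀ i, v i ≠ 0) (hc : ∀ i, c i ≡ 1 [MOD k])
    (hinj : ∀ i j, c i = c j → v i = v j → i = j) (hfiber : #{i | c i = d} ≤ k) (hd : 0 < d)
    (hdk : d ≡ 1 [MOD k]) {A B : Finset ι} (hA : ∀ i ∈ A, d ≤ c i) (hB : ∀ i ∈ B, d ≤ c i)
    (h : ∏ i ∈ A, (1 + C (v i) * X ^ c i) = ∏ i ∈ B, (1 + C (v i) * X ^ c i)) :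
    {i ∈ A | c i = d} = {i ∈ B | c i = d} := by
  refine eq_of_prod_one_add_C_mul_X_eq (fun i _ => hv i)
    (fun i hi j hj hij => hinj i j ?_ hij) ?_
  · simp only [coe_union, coe_filter, Set.mem_union, Set.mem_ofPred_eq] at hi hj
    rcases hi with ⟨-, hi⟩ | ⟨-, hi⟩ <;> rcases hj with ⟨-, hj⟩ | ⟨-, hj⟩ <;> rw [hi, hj]
  ext r
  by_cases hr : r ≤ k
  · rw [← coeff_prod_one_add_C_mul_X_pow_mul v hd hdk (fun i _ => hc i) hA hr, h,
      coeff_prod_one_add_C_mul_X_pow_mul v hd hdk (fun i _ => hc i) hB hr]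
  have hdeg {s : Finset ι} : (∏ i ∈ s with c i = d, (1 + C (v i) * X)).natDegree < r := by
    have := natDegree_prod_one_add_C_mul_X_pow_le {i ∈ s | c i = d} (fun _ => 1) v
    simp only [pow_one, sum_const, smul_eq_mul, mul_one] at this
    exact this.trans_lt <| (card_le_card (filter_subset_filter _ (subset_univ s))).trans_lt
      (hfiber.trans_lt (not_le.mp hr))
  rw [coeff_eq_zero_of_natDegree_lt hdeg, coeff_eq_zero_of_natDegree_lt hdeg]

theorem Polynomial.eq_of_prod_one_add_C_mul_X_pow_eq [Fintype ι] [DecidableEq ι]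
    {c : ι → ℕ} {v : ι → F} {k : ℕ} (hv : ∀ i, v i ≠ 0) (hc0 : ∀ i, 0 < c i)
    (hc : ∀ i, c i ≡ 1 [MOD k]) (hinj : ∀ i j, c i = c j → v i = v j → i = j)
    (hfiber : ∀ d, #{i | c i = d} ≤ k) {A B : Finset ι}
    (h : ∏ i ∈ A, (1 + C (v i) * X ^ c i) = ∏ i ∈ B, (1 + C (v i) * X ^ c i)) : A = B := by
  by_contra hAB
  -- below the least degree `c i₀` at which `A` and `B` differ, their factors agree and cancel
  obtain ⟨i₀, hi₀, hmin⟩ := (symmDiff A B).exists_min_image c (symmDiff_nonempty.mpr hAB)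
  have hlow : {i ∈ A | c i < c i₀} = {i ∈ B | c i < c i₀} := by
    ext i
    simp only [mem_filter]
    have := fun hi => (hmin i hi).not_gt
    rw [mem_symmDiff] at this
    tauto
  have hsplit (s : Finset ι) := (prod_filter_mul_prod_filter_not s (fun i => c i < c i₀)
    fun i => 1 + C (v i) * X ^ c i).symm
  rw [hsplit A, hsplit B, hlow] at h
  have hne : ∏ i ∈ B with c i < c i₀, (1 + C (v i) * X ^ c i) ≠ 0 :=
    prod_ne_zero_iff.mpr fun i _ h0 => by simpa [(hc0 i).ne] using congrArg (coeff · 0) h0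
  have hrow := filter_eq_of_prod_one_add_C_mul_X_pow_eq hv hc hinj (hfiber _) (hc0 i₀) (hc i₀)
    (A := {i ∈ A | ¬ c i < c i₀}) (B := {i ∈ B | ¬ c i < c i₀})
    (fun i hi => not_lt.mp (mem_filter.mp hi).2) (fun i hi => not_lt.mp (mem_filter.mp hi).2)
    (mul_left_cancel₀ hne h)
  have := congrArg (i₀ ∈ ·) hrow
  simp only [mem_filter, lt_irrefl, not_false_eq_true, and_true, eq_iff_iff] at this
  rw [mem_symmDiff] at hi₀
  tauto

end BinomialProducts

theorem card_le_orderOf_of_injOn {M α : Type*} [Monoid M] {x : M} (hx : IsOfFinOrder x)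
    {s : Finset α} {N : α → ℕ} (h : Set.InjOn (fun e => x ^ N e) s) : #s ≤ orderOf x := by
  calc #s ≤ #(range (orderOf x)) :=
        card_le_card_of_injOn (fun e => N e % orderOf x)
          (fun e _ => mem_coe.mpr (mem_range.mpr (Nat.mod_lt _ hx.orderOf_pos)))
          fun e he e' he' hee' => h he he' <| by
            simpa only [pow_mod_orderOf] using congrArg (fun n => x ^ n) hee'
    _ = orderOf x := card_range _

namespace AdjoinRoot

section Field

variable {F : Type*} [Field F] {f : F[X]}

theorem root_add_of_ne_zero (hf : 1 < f.natDegree) (b : F) : root f + of f b ≠ 0 := by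
  rw [← mk_X, ← mk_C, ← map_add, Ne, mk_eq_zero]
  exact fun h => by simpa using (natDegree_le_of_dvd h (X_add_C_ne_zero b)).trans_lt' hf

theorem eq_of_aeval_root_eq {g h : F[X]} (hg : g.natDegree < f.natDegree)
    (hh : h.natDegree < f.natDegree) (e : aeval (root f) g = aeval (root f) h) : g = h := by
  rw [aeval_eq, aeval_eq, mk_eq_mk] at e
  exact sub_eq_zero.mp <| eq_zero_of_dvd_of_natDegree_lt e <|
    (natDegree_sub_le _ _).trans_lt (max_lt hg hh)

variable [Fintype F] [Fact (Irreducible f)]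

instance : Module.Finite F (AdjoinRoot f) :=
  (powerBasis (Fact.out : Irreducible f).ne_zero).finite

instance : Finite (AdjoinRoot f) := Module.finite_of_finite F

theorem frobeniusAlgHom_pow_apply (s : ℕ) (x : AdjoinRoot f) :
    (FiniteField.frobeniusAlgHom F (AdjoinRoot f) ^ s) x = x ^ Fintype.card F ^ s := by
  rw [AlgHom.coe_pow, FiniteField.coe_frobeniusAlgHom, pow_iterate]

theorem root_add_of_pow_card_pow (s : ℕ) (b : F) :
    (root f + of f b) ^ Fintype.card F ^ s = root f ^ Fintype.card F ^ s + of f b := by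
  simp only [← frobeniusAlgHom_pow_apply, ← algebraMap_eq, map_add, AlgHom.commutes]

theorem injOn_root_add_of_pow_card_pow (b : F) :
    Set.InjOn (fun s => (root f + of f b) ^ Fintype.card F ^ s) (Set.Iio f.natDegree) := by
  intro s hs t ht h
  have hφ : FiniteField.frobeniusAlgHom F (AdjoinRoot f) ^ s =
      FiniteField.frobeniusAlgHom F (AdjoinRoot f) ^ t := algHom_ext <| by
    simpa only [frobeniusAlgHom_pow_apply, root_add_of_pow_card_pow, add_left_inj] using h
  have hord : orderOf (FiniteField.frobeniusAlgHom F (AdjoinRoot f)) = f.natDegree := by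
    rw [FiniteField.orderOf_frobeniusAlgHom,
      (powerBasis (Fact.out : Irreducible f).ne_zero).finrank, powerBasis_dim]
  exact pow_injOn_Iio_orderOf (hord ▸ hs) (hord ▸ ht) hφ

end Field

theorem root_X_pow_sub_C_pow {R : Type*} [CommRing R] {m : ℕ} {a : R} (n : ℕ) :
    root (X ^ m - C a) ^ n = of _ (a ^ (n / m)) * root (X ^ m - C a) ^ (n % m) := by
  have hroot : root (X ^ m - C a) ^ m = of _ a := by
    have := eval₂_root (X ^ m - C a)
    rwa [eval₂_sub, eval₂_X_pow, eval₂_C, sub_eq_zero] at this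
  conv_lhs => rw [← Nat.div_add_mod n m, pow_add, pow_mul, hroot, ← map_pow]

section XPowSubC

variable {F : Type*} [Field F] [Fintype F] {m : ℕ} {a : F} [Fact (Irreducible (X ^ m - C a))]
  {ι : Type*} [Fintype ι] [DecidableEq ι] {k : ℕ} {τ c : ι → ℕ}

local notation "q" => Fintype.card F

theorem injOn_prod_root_add_of_pow (hm : 1 < m) (hτ : Function.Injective τ)
    (hτm : ∀ i, τ i < m) (hτc : ∀ i, q ^ τ i % m = c i) (hc0 : ∀ i, 0 < c i)
    (hc : ∀ i, c i ≡ 1 [MOD k]) (hfiber : ∀ d, #{i | c i = d} ≤ k) {b : F} (hb : b ≠ 0) :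
    Set.InjOn (fun T : Finset ι => ∏ i ∈ T, (root (X ^ m - C a) + of _ b) ^ q ^ τ i)
      {T | ∑ i ∈ T, c i < m} := by
  have hdeg : (X ^ m - C a).natDegree = m := natDegree_X_pow_sub_C
  have ha : a ≠ 0 := by
    rintro rfl
    exact not_irreducible_pow hm.ne'
      (by simpa using (Fact.out : Irreducible (X ^ m - C (0 : F))))
  set v : ι → F := fun i => a ^ (q ^ τ i / m) / b
  have hv (i : ι) : v i ≠ 0 := div_ne_zero (pow_ne_zero _ ha) hb
  have hconj (i : ι) : (root (X ^ m - C a) + of _ b) ^ q ^ τ i =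
      of _ b * aeval (root (X ^ m - C a)) (1 + C (v i) * X ^ c i) := by
    rw [root_add_of_pow_card_pow, root_X_pow_sub_C_pow, hτc]
    simp only [map_add, map_one, map_mul, aeval_C, aeval_X_pow, algebraMap_eq, v, map_div₀]
    field_simp [(map_ne_zero (of (X ^ m - C a))).mpr hb]
    ring
  have hprod (T : Finset ι) : ∏ i ∈ T, (root (X ^ m - C a) + of _ b) ^ q ^ τ i =
      aeval (root (X ^ m - C a)) (C (b ^ #T) * ∏ i ∈ T, (1 + C (v i) * X ^ c i)) := by
    simp only [hconj, prod_mul_distrib, prod_const, map_mul, map_prod, aeval_C, algebraMap_eq,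
      map_pow]
  have hinj (i j : ι) (hcij : c i = c j) (hvij : v i = v j) : i = j :=
    hτ <| injOn_root_add_of_pow_card_pow b (by rw [Set.mem_Iio, hdeg]; exact hτm i)
      (by rw [Set.mem_Iio, hdeg]; exact hτm j) <| by
      simp only [hconj, hcij, hvij]
  have hdegT {T : Finset ι} (hT : ∑ i ∈ T, c i < m) :
      (C (b ^ #T) * ∏ i ∈ T, (1 + C (v i) * X ^ c i)).natDegree < (X ^ m - C a).natDegree :=
    (natDegree_C_mul_le _ _).trans_lt <|
      (natDegree_prod_one_add_C_mul_X_pow_le _ _ _).trans_lt (hdeg.symm ▸ hT)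
  intro T hT T' hT' h
  have hP := eq_of_aeval_root_eq (hdegT hT) (hdegT hT')
    ((hprod T).symm.trans (h.trans (hprod T')))
  have hc0' (i : ι) : c i ≠ 0 := (hc0 i).ne'
  have hb' : b ^ #T = b ^ #T' := by simpa [eval_prod, hc0'] using congrArg (eval 0) hP
  rw [hb'] at hP
  exact eq_of_prod_one_add_C_mul_X_pow_eq hv hc0 hc hinj hfiber
    (mul_left_cancel₀ (C_ne_zero.mpr (pow_ne_zero _ hb)) hP)

theorem card_le_orderOf_root_add_of (hm : 1 < m) (hτ : Function.Injective τ)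
    (hτm : ∀ i, τ i < m) (hτc : ∀ i, q ^ τ i % m = c i) (hc0 : ∀ i, 0 < c i)
    (hc : ∀ i, c i ≡ 1 [MOD k]) (hfiber : ∀ d, #{i | c i = d} ≤ k) {b : F} (hb : b ≠ 0)
    {𝒮 : Finset (Finset ι)} (h𝒮 : ∀ T ∈ 𝒮, ∑ i ∈ T, c i < m) :
    #𝒮 ≤ orderOf (root (X ^ m - C a) + of _ b) := by
  have hdeg : 1 < (X ^ m - C a).natDegree := by rwa [natDegree_X_pow_sub_C]
  refine card_le_orderOf_of_injOn (N := fun T => ∑ i ∈ T, q ^ τ i)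
    (isOfFinOrder_iff_isUnit.mpr (isUnit_iff_ne_zero.mpr (root_add_of_ne_zero hdeg b))) ?_
  simpa only [prod_pow_eq_pow_sum] using
    (injOn_prod_root_add_of_pow (a := a) hm hτ hτm hτc hc0 hc hfiber hb).mono
      fun T hT => h𝒮 T hT

end XPowSubC

end AdjoinRoot

section Encoding

variable {ι : Type*} [Fintype ι]

theorem injective_filter_eq_one :
    Function.Injective fun e : ι → Fin 2 => ({i | e i = 1} : Finset ι) :=
  fun e e' h => funext fun i => by
    have := congrArg (i ∈ ·) h
    simp only [mem_filter, mem_univ, true_and, eq_iff_iff] at this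
    omega

theorem sum_mul_val_eq_sum_filter_eq_one (w : ι → ℕ) (e : ι → Fin 2) :
    ∑ i, w i * (e i : ℕ) = ∑ i with e i = 1, w i := by
  rw [sum_filter]
  refine sum_congr rfl fun i _ => ?_
  split_ifs with h
  · simp [h]
  · simp [show e i = 0 by omega]

theorem card_filter_fst_mul_add_one_eq_le (l k d : ℕ) :
    #{p : Fin l × Fin k | (p.1 : ℕ) * k + 1 = d} ≤ k := by
  calc _ ≤ #(univ : Finset (Fin k)) :=
        card_le_card_of_injOn Prod.snd (fun _ _ => mem_coe.mpr (mem_univ _)) fun p hp p' hp' h => by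
          simp only [coe_filter, mem_univ, true_and, Set.mem_ofPred_eq] at hp hp'
          exact Prod.ext (Fin.ext (Nat.eq_of_mul_eq_mul_right p.2.pos (by omega))) h
    _ = k := by simp

end Encoding

theorem order_at_least_card_S_general
    (F : Type*) [Field F] [Fintype F] (q m : ℕ)
    (hq : Fintype.card F = q)
    (hm2 : 2 ≤ m)
    (hprime : ∀ p : ℕ, p.Prime → p ∣ m → p ∣ (q - 1))
    (h4 : 4 ∣ m → 4 ∣ (q - 1))
    (l k : ℕ)
    (hl : l = orderOf ((q : ZMod m)))
    (hldvd : l ∣ m)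
    (hk : k = m / l)
    (a : F)
    (hirr : Irreducible (X ^ m - C a : Polynomial F))
    (b : F) (hb : b ≠ 0) :
    (Finset.univ.filter (fun e : Fin l × Fin k → Fin 2 =>
        ∑ p : Fin l × Fin k, ((p.1 : ℕ) * k + 1) * (e p : ℕ) < m)).card ≤
      orderOf (AdjoinRoot.root (X ^ m - C a : Polynomial F)
        + AdjoinRoot.of (X ^ m - C a : Polynomial F) b) := by
  subst hq
  have hq1 : 1 < Fintype.card F := Fintype.one_lt_card
  have hqm : (Fintype.card F).Coprime m := Nat.coprime_of_dvd fun p hp hpq hpm =>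
    hp.not_dvd_one <| by simpa [Nat.sub_sub_self hq1.le] using Nat.dvd_sub hpq (hprime p hp hpm)
  have hlk : l * k = m := hk ▸ Nat.mul_div_cancel' hldvd
  have hkq := modEq_one_of_orderOf_eq hq1 (by omega) hqm hprime h4 hl.symm hlk
  obtain ⟨τ, hτ, hτm, hτc⟩ := exists_injective_pow_mod hm2 hqm hkq hl.symm hlk
  have := Fact.mk hirr
  rw [← card_image_of_injective _ injective_filter_eq_one]
  refine AdjoinRoot.card_le_orderOf_root_add_of hm2 hτ hτm hτc (fun _ => Nat.succ_pos _)
    (fun _ => by simp [Nat.ModEq]) (card_filter_fst_mul_add_one_eq_le l k) hb ?_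
  simp only [mem_image, mem_filter, mem_univ, true_and]
  rintro _ ⟨e, he, rfl⟩
  rwa [← sum_mul_val_eq_sum_filter_eq_one]

/-- Theorem 7: the multiplicative order of `θ + b` is at least the number of 0-1
vectors `(e_{ij})` of length `kl` with `∑_{i,j} (ik+1)·e_{ij} < m`. -/
theorem order_at_least_card_S
    (F : Type*) [Field F] [Fintype F] (q m : ℕ)
    (hq : Fintype.card F = q)
    (hodd : ∃ p n : ℕ, p.Prime ∧ Odd p ∧ q = p ^ n)
    (hq5 : 5 ≤ q)
    (hm2 : 2 ≤ m)
    (hmndvd : ¬ m ∣ (q - 1))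
    (hprime : ∀ p : ℕ, p.Prime → p ∣ m → p ∣ (q - 1))
    (h4 : 4 ∣ m → 4 ∣ (q - 1))
    (l k : ℕ)
    (hl : l = orderOf ((q : ZMod m)))
    (hldvd : l ∣ m)
    (hk : k = m / l)
    (a : F)
    (ha : orderOf a = ∏ p ∈ m.primeFactors, p ^ (q - 1).factorization p)
    (hirr : Irreducible (X ^ m - C a : Polynomial F))
    (b : F) (hb : b ≠ 0) :
    (Finset.univ.filter (fun e : Fin l × Fin k → Fin 2 =>
        ∑ p : Fin l × Fin k, ((p.1 : ℕ) * k + 1) * (e p : ℕ) < m)).card ≤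
      orderOf (AdjoinRoot.root (X ^ m - C a : Polynomial F)
        + AdjoinRoot.of (X ^ m - C a : Polynomial F) b) :=
  order_at_least_card_S_general F q m hq hm2 hprime h4 l k hl hldvd hk a hirr b hb
end

section
/- Let k ≥ 3 and l ≥ 2 be integers with l > k and set m = kl. Let S be the set of vectors e = (e_{ij})_{0 ≤ i ≤ l−1, 0 ≤ j ≤ k−1} ∈ {0,1}^{kl} satisfying ∑_{i=0}^{l−1} ∑_{j=0}^{k−1} (ik+1)·e_{ij} < m. Then the cardinality of S is at least 2^{√(2m)}. -/
open Finset


def Wf (k n : ℕ) : ℕ := ∑ c ∈ Finset.range n, (c / k * k + 1)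

lemma Wf_succ (k n : ℕ) : Wf k (n+1) = Wf k n + (n / k * k + 1) :=
  Finset.sum_range_succ _ _

lemma Wf_ge (k n : ℕ) : n ≤ Wf k n := by
  calc n = ∑ c ∈ Finset.range n, 1 := by simp
  _ ≤ _ := Finset.sum_le_sum (fun i _ => by omega)

lemma Wf_mono (k : ℕ) : Monotone (Wf k) := fun _ _ h =>
  Finset.sum_le_sum_of_subset (Finset.range_subset_range.2 h)

lemma Wf_closed (k : ℕ) (hk : 0 < k) (n : ℕ) :
    2 * Wf k n + (n % k)^2 + k^2 * (n / k) = n^2 + 2*n := by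
  induction n with
  | zero => simp [Wf]
  | succ n ih =>
    rw [Wf_succ]
    have h1 : n = k * (n / k) + n % k := (Nat.div_add_mod n k).symm
    have hmk : n % k < k := Nat.mod_lt _ hk
    by_cases hd : k ∣ (n+1)
    · have ht : (n+1)/k = n/k + 1 := Nat.succ_div_of_dvd hd
      have hs : (n+1) % k = 0 := Nat.eq_zero_of_dvd_of_lt hd |> fun _ => Nat.mod_eq_zero_of_dvd hd
      have hsk : n % k + 1 = k := by
        have := Nat.div_add_mod (n+1) k
        rw [ht, hs] at this
        nlinarith
      rw [ht, hs]
      zify at ih h1 hsk ⊢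
      linear_combination ih - 2*h1 - ((k:ℤ) + (n % k) + 1) * hsk
    · have ht : (n+1)/k = n/k := Nat.succ_div_of_not_dvd hd
      have hs : (n+1) % k = n % k + 1 := by
        have := Nat.div_add_mod (n+1) k
        rw [ht] at this
        omega
      rw [ht, hs]
      zify at ih h1 ⊢
      linear_combination ih - 2*h1

lemma Wf_k (k : ℕ) : Wf k k = k := by
  have h : ∀ c ∈ Finset.range k, c / k * k + 1 = 1 := fun c hc => by
    rw [Nat.div_eq_of_lt (Finset.mem_range.1 hc)]; omega
  rw [Wf, Finset.sum_congr rfl h]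
  simp

lemma NT (k l m n : ℕ) (hk : 3 ≤ k) (hlk : k < l) (hm : m = k * l)
    (hWn : Wf k n + 1 ≤ m) (hWsucc : m ≤ Wf k (n+1)) :
    n + 1 ≤ m ∧ (2*m ≤ n^2 ∨
      (2*m ≤ n^2 + n ∧ 1 ≤ n ∧ Wf k (n-1) + (n/k*k+1) + 1 ≤ m)) := by
  have hk0 : 0 < k := by omega
  have hmlb : k*(k+1) ≤ m := by subst hm; nlinarith
  have hm2k : 2*k + 2 ≤ m := by nlinarith
  -- n ≥ k + 1
  have hnk : k + 1 ≤ n := by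
    by_contra h
    push_neg at h
    have h1 : Wf k (n+1) ≤ Wf k (k+1) := Wf_mono _ (by omega)
    have h2 : Wf k (k+1) = 2*k+1 := by
      rw [Wf_succ, Wf_k, Nat.div_self hk0]
      ring
    omega
  set t := n / k with hT
  set s := n % k with hS
  have hn : n = t*k + s := by
    rw [hT, hS]
    have h1 := Nat.div_add_mod n k
    linarith [Nat.mul_comm (n/k) k]
  have hs : s < k := Nat.mod_lt _ hk0
  have ht1 : 1 ≤ t := (Nat.one_le_div_iff hk0).2 (by omega)
  have hc : 2 * Wf k n + s^2 + k^2*t = n^2 + 2*n := Wf_closed k hk0 n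
  have hWs : Wf k (n+1) = Wf k n + (t*k+1) := Wf_succ k n
  have key : 2*m + s^2 + k^2*t ≤ n^2 + 2*n + 2*(t*k) + 2 := by linarith
  clear_value t s
  clear hT hS hWs hWsucc
  have hn1 : n + 1 ≤ m := by have := Wf_ge k n; omega
  refine ⟨hn1, ?_⟩
  by_cases hbig : 2*m ≤ n^2
  · exact Or.inl hbig
  push_neg at hbig   -- n^2 < 2m
  right
  have g1 : k ≤ t*k := by
    calc k = 1*k := (one_mul k).symm
    _ ≤ t*k := Nat.mul_le_mul_right k ht1
  refine ⟨?_, by omega, ?_⟩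
  · -- 2m ≤ n^2 + n
    by_cases hk4 : 4 ≤ k
    · have g2 : 4*(t*k) ≤ k^2*t := by
        calc 4*(t*k) ≤ k*(t*k) := Nat.mul_le_mul_right (t*k) hk4
        _ = k^2*t := by ring
      have f2 : s ≤ s^2 := Nat.le_self_pow two_ne_zero s
      have f3 : 4 ≤ t*k := le_trans hk4 g1
      linarith
    · have hk3 : k = 3 := by omega
      subst hk3
      obtain ⟨A, hA⟩ : ∃ A, t*t = A := ⟨_, rfl⟩
      have hsc : s = 0 ∨ s = 1 ∨ s = 2 := by omega
      rcases hsc with h0 | h1 | h2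
      · subst h0
        rw [show n = t*3 from by linarith] at key ⊢
        rw [show (t*3)^2 = 9*A from by rw [← hA]; ring] at key ⊢
        omega
      · subst h1
        have hpar : 2 ∣ A + t := by
          have h := Nat.even_mul_succ_self t
          rw [Nat.mul_succ, hA] at h
          exact h.two_dvd
        rw [show n = t*3+1 from by linarith] at key ⊢
        rw [show (t*3+1)^2 = 9*A + 6*t + 1 from by rw [← hA]; ring] at key ⊢
        omega
      · subst h2
        rw [show n = t*3+2 from by linarith] at key ⊢
        rw [show (t*3+2)^2 = 9*A + 12*t + 4 from by rw [← hA]; ring] at key ⊢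
        omega
  · -- Wf k (n-1) + (t*k + 1) + 1 ≤ m
    by_cases hs1 : 1 ≤ s
    · obtain ⟨s', rfl⟩ : ∃ s', s = s' + 1 := ⟨s - 1, by omega⟩
      have hn1' : n - 1 = t*k + s' := by
        rw [show n = (t*k+s') + 1 from by linarith, Nat.add_sub_cancel]
      have hdiv : (n-1)/k = t := by
        rw [hn1', show t*k + s' = k*t + s' from by ring,
          Nat.mul_add_div hk0, Nat.div_eq_of_lt (by omega)]
        omega
      have heq : Wf k n = Wf k (n-1) + ((n-1)/k*k + 1) := by
        have h := Wf_succ k (n-1)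
        rwa [show n - 1 + 1 = n from by omega] at h
      rw [hdiv] at heq
      linarith
    · have hs0 : s = 0 := by omega
      subst hs0
      have ht2 : 2 ≤ t := by
        by_contra h
        push_neg at h
        have : t = 1 := by omega
        subst this
        simp at hn
        omega
      obtain ⟨t', rfl⟩ : ∃ t', t = t' + 1 := ⟨t - 1, by omega⟩
      obtain ⟨u, hu⟩ : ∃ u, k = u + 1 := ⟨k - 1, by omega⟩
      have e1 : (t'+1)*k = t'*k + k := by ring
      have hn1' : n - 1 = t'*k + u := by
        rw [show n = (t'*k+u) + 1 from by linarith, Nat.add_sub_cancel]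
      have hdiv : (n-1)/k = t' := by
        rw [hn1', show t'*k + u = k*t' + u from by ring,
          Nat.mul_add_div hk0, Nat.div_eq_of_lt (by omega)]
        omega
      have heq : Wf k n = Wf k (n-1) + ((n-1)/k*k + 1) := by
        have h := Wf_succ k (n-1)
        rwa [show n - 1 + 1 = n from by omega] at h
      rw [hdiv] at heq
      -- suffices : Wf k n + k + 1 ≤ m
      have hG : Wf k n + k + 1 ≤ m := by
        by_cases hk4 : 4 ≤ k
        · have g2 : 4*((t'+1)*k) ≤ k^2*(t'+1) := by
            calc 4*((t'+1)*k) ≤ k*((t'+1)*k) := Nat.mul_le_mul_right _ hk4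
            _ = k^2*(t'+1) := by ring
          have g3 : 2*k ≤ (t'+1)*k := Nat.mul_le_mul_right k (by omega)
          linarith
        · have hk3 : k = 3 := by omega
          subst hk3
          obtain ⟨A, hA⟩ : ∃ A, (t'+1)*(t'+1) = A := ⟨_, rfl⟩
          rw [show n = (t'+1)*3 from by linarith] at hc hbig ⊢
          rw [show ((t'+1)*3)^2 = 9*A from by rw [← hA]; ring] at hc hbig
          rw [show (3:ℕ)^2*(t'+1) = 9*t'+9 from by ring] at hc
          omega
      linarith [e1]

section counting
variable (k l : ℕ)

def idx (p : Fin l × Fin k) : ℕ := (p.1 : ℕ) * k + (p.2 : ℕ)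

lemma idx_div (hk0 : 0 < k) (p : Fin l × Fin k) : idx k l p / k = (p.1 : ℕ) := by
  unfold idx
  rw [mul_comm, Nat.mul_add_div hk0, Nat.div_eq_of_lt p.2.2]
  omega

lemma idx_mod (p : Fin l × Fin k) : idx k l p % k = (p.2 : ℕ) := by
  unfold idx
  rw [Nat.mul_add_mod', Nat.mod_eq_of_lt p.2.2]

lemma idx_inj (hk0 : 0 < k) {p q : Fin l × Fin k} (h : idx k l p = idx k l q) : p = q := by
  have h1 := idx_div k l hk0 p
  have h2 := idx_div k l hk0 q
  have h3 := idx_mod k l p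
  have h4 := idx_mod k l q
  rw [h] at h1 h3
  ext
  · exact (h1.symm.trans h2) ▸ rfl
  · exact (h3.symm.trans h4) ▸ rfl

lemma idx_lt (p : Fin l × Fin k) : idx k l p < k * l := by
  unfold idx
  have h1 : (p.1 : ℕ) < l := p.1.2
  have h2 : (p.2 : ℕ) < k := p.2.2
  calc (p.1:ℕ) * k + (p.2:ℕ) < (p.1:ℕ) * k + k := by omega
  _ = ((p.1:ℕ) + 1) * k := by ring
  _ ≤ l * k := Nat.mul_le_mul_right k (by omega)
  _ = k * l := mul_comm l k

def pOf (hk0 : 0 < k) (c : ℕ) (hc : c < k * l) : Fin l × Fin k :=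
  (⟨c / k, Nat.div_lt_of_lt_mul hc⟩, ⟨c % k, Nat.mod_lt _ hk0⟩)

lemma idx_pOf (hk0 : 0 < k) (c : ℕ) (hc : c < k * l) : idx k l (pOf k l hk0 c hc) = c := by
  unfold idx pOf
  exact Nat.div_add_mod' c k

def Pref (n : ℕ) : Finset (Fin l × Fin k) :=
  Finset.univ.filter (fun p => idx k l p < n)

lemma sum_Pref (hk0 : 0 < k) (n : ℕ) (hn : n ≤ k * l) :
    ∑ p ∈ Pref k l n, ((p.1 : ℕ) * k + 1) = Wf k n := by
  rw [Wf]
  refine Finset.sum_bij' (fun p _ => idx k l p)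
    (fun c hc => pOf k l hk0 c (lt_of_lt_of_le (Finset.mem_range.1 hc) hn)) ?_ ?_ ?_ ?_ ?_
  · intro a ha
    simp only [Pref, Finset.mem_filter] at ha
    exact Finset.mem_range.2 ha.2
  · intro c hc
    simp only [Pref, Finset.mem_filter]
    exact ⟨Finset.mem_univ _, by rw [idx_pOf]; exact Finset.mem_range.1 hc⟩
  · intro a ha
    exact idx_inj k l hk0 (by rw [idx_pOf])
  · intro c hc
    exact idx_pOf k l hk0 c _
  · intro a ha
    rw [← idx_div k l hk0 a]

lemma card_Pref (hk0 : 0 < k) (n : ℕ) (hn : n ≤ k * l) : (Pref k l n).card = n := by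
  have h : (Pref k l n).card = (Finset.range n).card := by
    refine Finset.card_bij' (fun p _ => idx k l p)
      (fun c hc => pOf k l hk0 c (lt_of_lt_of_le (Finset.mem_range.1 hc) hn)) ?_ ?_ ?_ ?_
    · intro a ha
      simp only [Pref, Finset.mem_filter] at ha
      exact Finset.mem_range.2 ha.2
    · intro c hc
      simp only [Pref, Finset.mem_filter]
      exact ⟨Finset.mem_univ _, by rw [idx_pOf]; exact Finset.mem_range.1 hc⟩
    · intro a ha
      exact idx_inj k l hk0 (by rw [idx_pOf])
    · intro c hc
      exact idx_pOf k l hk0 c _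
  rw [h, Finset.card_range]

def ef (A : Finset (Fin l × Fin k)) : Fin l × Fin k → Fin 2 :=
  fun p => if p ∈ A then 1 else 0

lemma ef_inj : Function.Injective (ef k l) := by
  intro A B h
  ext p
  have := congrFun h p
  simp only [ef] at this
  constructor <;> intro hp
  · by_contra hq
    rw [if_pos hp, if_neg hq] at this
    exact absurd this (by decide)
  · by_contra hq
    rw [if_neg hq, if_pos hp] at this
    exact absurd this (by decide)

lemma sum_ef (A : Finset (Fin l × Fin k)) :
    ∑ p : Fin l × Fin k, ((p.1 : ℕ) * k + 1) * ((ef k l A p : ℕ)) = ∑ p ∈ A, ((p.1 : ℕ) * k + 1) := by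
  have h : ∀ p : Fin l × Fin k, ((ef k l A p : ℕ)) = if p ∈ A then 1 else 0 := by
    intro p
    unfold ef
    split <;> rfl
  calc ∑ p : Fin l × Fin k, ((p.1 : ℕ) * k + 1) * ((ef k l A p : ℕ))
      = ∑ p : Fin l × Fin k, (if p ∈ A then ((p.1 : ℕ) * k + 1) else 0) := by
        refine Finset.sum_congr rfl fun p _ => ?_
        rw [h p]
        split <;> simp
  _ = ∑ p ∈ Finset.univ ∩ A, ((p.1 : ℕ) * k + 1) := Finset.sum_ite_mem _ _ _
  _ = ∑ p ∈ A, ((p.1 : ℕ) * k + 1) := by rw [Finset.univ_inter]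

end counting

section main
variable (k l m : ℕ)

noncomputable def Sfin : Finset (Fin l × Fin k → Fin 2) :=
  Finset.univ.filter (fun e : Fin l × Fin k → Fin 2 =>
        ∑ p : Fin l × Fin k, ((p.1 : ℕ) * k + 1) * (e p : ℕ) < m)

lemma ef_mem_Sfin (hk0 : 0 < k) {n : ℕ} (hn : n ≤ k * l) {A : Finset (Fin l × Fin k)}
    (hA : A ⊆ Pref k l n) (hW : Wf k n < m) : ef k l A ∈ Sfin k l m := by
  simp only [Sfin, Finset.mem_filter]
  refine ⟨Finset.mem_univ _, ?_⟩
  rw [sum_ef]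
  calc ∑ p ∈ A, ((p.1 : ℕ) * k + 1) ≤ ∑ p ∈ Pref k l n, ((p.1 : ℕ) * k + 1) :=
        Finset.sum_le_sum_of_subset hA
  _ = Wf k n := sum_Pref k l hk0 n hn
  _ < m := hW

lemma count_one (hk0 : 0 < k) (n : ℕ) (hn : n ≤ k * l) (hW : Wf k n < m) :
    2^n ≤ (Sfin k l m).card := by
  have hsub : (Pref k l n).powerset.image (ef k l) ⊆ Sfin k l m := by
    intro f hf
    simp only [Finset.mem_image, Finset.mem_powerset] at hf
    obtain ⟨A, hA, rfl⟩ := hf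
    exact ef_mem_Sfin k l m hk0 hn hA hW
  calc (2:ℕ)^n = (Pref k l n).powerset.card := by
        rw [Finset.card_powerset, card_Pref k l hk0 n hn]
  _ = ((Pref k l n).powerset.image (ef k l)).card :=
        (Finset.card_image_of_injective _ (ef_inj k l)).symm
  _ ≤ (Sfin k l m).card := Finset.card_le_card hsub

lemma count_two (hk0 : 0 < k) (n : ℕ) (h1n : 1 ≤ n) (hnkl : n < k * l)
    (hW : Wf k n < m) (hW2 : Wf k (n-1) + (n/k*k+1) < m) :
    2^n + 2^(n-1) ≤ (Sfin k l m).card := by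
  set c0 : Fin l × Fin k := pOf k l hk0 n hnkl with hc0
  have hidx : idx k l c0 = n := idx_pOf k l hk0 n hnkl
  have hc0w : ((c0.1 : ℕ) * k + 1) = n/k*k + 1 := by
    simp [hc0, pOf]
  have hc0notin : ∀ {j : ℕ}, j ≤ n → c0 ∉ Pref k l j := by
    intro j hj hmem
    simp only [Pref, Finset.mem_filter] at hmem
    omega
  set T1 := (Pref k l n).powerset.image (ef k l) with hT1
  set T2 := (Pref k l (n-1)).powerset.image (fun B => ef k l (insert c0 B)) with hT2
  have hsub1 : T1 ⊆ Sfin k l m := by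
    intro f hf
    simp only [hT1, Finset.mem_image, Finset.mem_powerset] at hf
    obtain ⟨A, hA, rfl⟩ := hf
    exact ef_mem_Sfin k l m hk0 (le_of_lt hnkl) hA hW
  have hsub2 : T2 ⊆ Sfin k l m := by
    intro f hf
    simp only [hT2, Finset.mem_image, Finset.mem_powerset] at hf
    obtain ⟨B, hB, rfl⟩ := hf
    have hc0B : c0 ∉ B := fun h => hc0notin (by omega) (hB h)
    simp only [Sfin, Finset.mem_filter]
    refine ⟨Finset.mem_univ _, ?_⟩
    rw [sum_ef, Finset.sum_insert hc0B]
    have h1 : ∑ p ∈ B, ((p.1 : ℕ) * k + 1) ≤ Wf k (n-1) := by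
      calc ∑ p ∈ B, ((p.1 : ℕ) * k + 1) ≤ ∑ p ∈ Pref k l (n-1), ((p.1 : ℕ) * k + 1) :=
            Finset.sum_le_sum_of_subset hB
      _ = Wf k (n-1) := sum_Pref k l hk0 (n-1) (by omega)
    rw [hc0w]
    omega
  have hcard1 : T1.card = 2^n := by
    rw [hT1, Finset.card_image_of_injective _ (ef_inj k l), Finset.card_powerset,
      card_Pref k l hk0 n (le_of_lt hnkl)]
  have hcard2 : T2.card = 2^(n-1) := by
    rw [hT2]
    rw [Finset.card_image_of_injOn, Finset.card_powerset, card_Pref k l hk0 (n-1) (by omega)]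
    intro B1 h1 B2 h2 heq
    simp only [Finset.mem_coe, Finset.mem_powerset] at h1 h2
    have h3 : insert c0 B1 = insert c0 B2 := ef_inj k l heq
    have hc1 : c0 ∉ B1 := fun h => hc0notin (by omega) (h1 h)
    have hc2 : c0 ∉ B2 := fun h => hc0notin (by omega) (h2 h)
    calc B1 = (insert c0 B1).erase c0 := (Finset.erase_insert hc1).symm
    _ = (insert c0 B2).erase c0 := by rw [h3]
    _ = B2 := Finset.erase_insert hc2
  have hdisj : Disjoint T1 T2 := by
    rw [Finset.disjoint_left]
    intro f hf1 hf2
    simp only [hT1, Finset.mem_image, Finset.mem_powerset] at hf1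
    simp only [hT2, Finset.mem_image, Finset.mem_powerset] at hf2
    obtain ⟨A, hA, rfl⟩ := hf1
    obtain ⟨B, hB, heq⟩ := hf2
    have hA0 : ef k l A c0 = 0 := by
      simp only [ef, if_neg (fun h => hc0notin le_rfl (hA h))]
    have hB1 : ef k l (insert c0 B) c0 = 1 := by
      simp only [ef, if_pos (Finset.mem_insert_self c0 B)]
    rw [heq, hA0] at hB1
    exact absurd hB1 (by decide)
  calc (2:ℕ)^n + 2^(n-1) = T1.card + T2.card := by rw [hcard1, hcard2]
  _ = (T1 ∪ T2).card := (Finset.card_union_of_disjoint hdisj).symm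
  _ ≤ (Sfin k l m).card := Finset.card_le_card (Finset.union_subset hsub1 hsub2)

end main

/-- Lemma 8: if `l > k ≥ 3` and `m = kl`, then the number of 0-1 vectors `(e_{ij})`
of length `kl` with `∑_{i,j} (ik+1)·e_{ij} < m` is at least `2 ^ √(2m)`. -/
theorem card_S_at_least
    (k l m : ℕ) (hk : 3 ≤ k) (hl : 2 ≤ l) (hlk : k < l) (hm : m = k * l) :
    (2 : ℝ) ^ Real.sqrt (2 * m) ≤
      ((Finset.univ.filter (fun e : Fin l × Fin k → Fin 2 =>
        ∑ p : Fin l × Fin k, ((p.1 : ℕ) * k + 1) * (e p : ℕ) < m)).card : ℝ) := by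
  have hk0 : 0 < k := by omega
  have hm1 : 1 ≤ m := by subst hm; exact Nat.mul_pos (by omega) (by omega)
  have hP0 : Wf k 0 + 1 ≤ m := by simp [Wf]; omega
  have hPn := Nat.findGreatest_spec (P := fun j => Wf k j + 1 ≤ m) (Nat.zero_le m) hP0
  set n := Nat.findGreatest (fun j => Wf k j + 1 ≤ m) m with hdef
  have hPn : Wf k n + 1 ≤ m := hPn
  have hnm : n + 1 ≤ m := by have := Wf_ge k n; omega
  have hlt : Nat.findGreatest (fun j => Wf k j + 1 ≤ m) m < n + 1 := by
    rw [← hdef]; exact Nat.lt_succ_self n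
  have hfail : ¬ (Wf k (n+1) + 1 ≤ m) :=
    Nat.findGreatest_is_greatest (P := fun j => Wf k j + 1 ≤ m) hlt hnm
  have hWsucc : m ≤ Wf k (n+1) := by omega
  clear_value n
  obtain ⟨hnm', hdisj⟩ := NT k l m n hk hlk hm hPn hWsucc
  rcases hdisj with h2m | ⟨hA, h1n, hB⟩
  · have hcount : 2^n ≤ (Sfin k l m).card :=
      count_one k l m hk0 n (by omega) hPn
    have hsq : Real.sqrt (2*(m:ℝ)) ≤ (n:ℝ) := by
      have h1 : (2*(m:ℝ)) ≤ ((n:ℝ))^2 := by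
        have h2 : ((2*m : ℕ):ℝ) ≤ ((n^2 : ℕ):ℝ) := Nat.cast_le.2 h2m
        push_cast at h2
        linarith
      calc Real.sqrt (2*(m:ℝ)) ≤ Real.sqrt ((n:ℝ)^2) := Real.sqrt_le_sqrt h1
      _ = (n:ℝ) := Real.sqrt_sq (Nat.cast_nonneg n)
    calc (2:ℝ)^Real.sqrt (2*(m:ℝ)) ≤ (2:ℝ)^((n:ℝ)) :=
          Real.rpow_le_rpow_of_exponent_le one_le_two hsq
    _ = ((2^n : ℕ):ℝ) := by rw [Real.rpow_natCast]; push_cast; ring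
    _ ≤ _ := Nat.cast_le.2 hcount
  · have hcount : 2^n + 2^(n-1) ≤ (Sfin k l m).card :=
      count_two k l m hk0 n h1n (by omega) hPn hB
    have hsq : Real.sqrt (2*(m:ℝ)) ≤ (n:ℝ) + 1/2 := by
      have h1 : (2*(m:ℝ)) ≤ ((n:ℝ) + 1/2)^2 := by
        have h2 : ((2*m : ℕ):ℝ) ≤ ((n^2 + n : ℕ):ℝ) := Nat.cast_le.2 hA
        push_cast at h2
        nlinarith
      calc Real.sqrt (2*(m:ℝ)) ≤ Real.sqrt (((n:ℝ)+1/2)^2) := Real.sqrt_le_sqrt h1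
      _ = (n:ℝ)+1/2 := Real.sqrt_sq (by positivity)
    have hsqrt2 : (2:ℝ)^((1:ℝ)/2) ≤ 3/2 := by
      rw [← Real.sqrt_eq_rpow]
      rw [show (3:ℝ)/2 = Real.sqrt (((3:ℝ)/2)^2) from (Real.sqrt_sq (by norm_num)).symm]
      apply Real.sqrt_le_sqrt
      norm_num
    have hpos : (0:ℝ) ≤ (2:ℝ)^((n:ℝ)) := (Real.rpow_pos_of_pos two_pos _).le
    obtain ⟨j, rfl⟩ : ∃ j, n = j + 1 := ⟨n - 1, by omega⟩
    calc (2:ℝ)^Real.sqrt (2*(m:ℝ)) ≤ (2:ℝ)^(((j+1:ℕ):ℝ)+1/2) :=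
          Real.rpow_le_rpow_of_exponent_le one_le_two hsq
    _ = (2:ℝ)^(((j+1:ℕ):ℝ)) * (2:ℝ)^((1:ℝ)/2) := Real.rpow_add (by norm_num) _ _
    _ ≤ (2:ℝ)^(((j+1:ℕ):ℝ)) * (3/2) := by nlinarith [hsqrt2, hpos]
    _ ≤ ((2^(j+1) + 2^(j+1-1) : ℕ):ℝ) := by
        rw [Real.rpow_natCast]
        push_cast
        rw [pow_succ]
        nlinarith [pow_pos (show (0:ℝ) < 2 by norm_num) j]
    _ ≤ _ := Nat.cast_le.2 hcount
end

section
/- Let q be a power of an odd prime with q ≥ 5, let m ≥ 2 be an integer that does not divide q−1 and such that every prime factor of m divides q−1 and, if 4 divides m, then 4 divides q−1. Let l = ord_m(q), assume l divides m and set k = m/l. Let a ∈ F_q be non-zero, assume x^m − a is irreducible over F_q, and let θ be the image of x in F_{q^m} = F_q[x]/(x^m − a). Then for each i ∈ {0, 1, …, l−1} there exist α_i ∈ {0, 1, …, l−1} and an integer r_i ≥ 0 such that q^{α_i} = (ik+1) + r_i·m and θ^{q^{α_i}} = a^{r_i}·θ^{ik+1}. -/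
open Polynomial

private lemma geom_aux (y : ℕ) : ∀ n : ℕ,
    y * ((Finset.range n).sum ((y + 1) ^ ·)) + 1 = (y + 1) ^ n := by
  intro n
  induction n with
  | zero => simp
  | succ n ih =>
    rw [Finset.sum_range_succ, Nat.mul_add, pow_succ]
    nlinarith [ih]

private lemma sum_odd (x l : ℕ) (hx : Odd x) (hl : Odd l) :
    Odd ((Finset.range l).sum (x ^ ·)) := by
  rw [Nat.odd_iff, Finset.sum_nat_mod]
  have h : ∀ j ∈ Finset.range l, x ^ j % 2 = 1 := fun j _ => Nat.odd_iff.mp (hx.pow)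
  rw [Finset.sum_congr rfl h, Finset.sum_const, Finset.card_range, smul_eq_mul, mul_one]
  exact Nat.odd_iff.mp hl

private lemma key_dvd (q m l k : ℕ) (hq5 : 5 ≤ q) (hqodd : Odd q)
    (hm0 : m ≠ 0) (hl0 : l ≠ 0) (hmlk : m = l * k)
    (hcop : Nat.Coprime q m)
    (hprime : ∀ p : ℕ, p.Prime → p ∣ m → p ∣ (q - 1))
    (h4 : 4 ∣ m → 4 ∣ (q - 1))
    (hml : m ∣ q ^ l - 1) : k ∣ q - 1 := by
  have hk0 : k ≠ 0 := by rintro rfl; simp [hmlk] at hm0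
  have hq10 : q - 1 ≠ 0 := by omega
  have hql1 : 1 < q ^ l := Nat.one_lt_pow hl0 (by omega)
  have hql0 : q ^ l - 1 ≠ 0 := by omega
  refine (Nat.factorization_prime_le_iff_dvd hk0 hq10).mp ?_
  intro p hp
  by_cases hpk : p ∣ k
  swap
  · rw [Nat.factorization_eq_zero_of_not_dvd hpk]; exact Nat.zero_le _
  have hpm : p ∣ m := hmlk ▸ Dvd.dvd.mul_left hpk l
  have hpq1 : p ∣ q - 1 := hprime p hp hpm
  have hpq : ¬ p ∣ q := by
    intro h
    have : p ∣ 1 := by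
      have := Nat.dvd_sub h hpq1
      simpa [show q - (q - 1) = 1 by omega] using this
    exact hp.one_lt.ne' (Nat.dvd_one.mp this)
  have hfacm : l.factorization p + k.factorization p = m.factorization p := by
    rw [hmlk, Nat.factorization_mul hl0 hk0]; simp
  have hvm : m.factorization p ≤ (q ^ l - 1).factorization p :=
    ((Nat.factorization_le_iff_dvd hm0 hql0).mpr hml) p
  -- suffices : v_p(q^l - 1) ≤ v_p(q-1) + v_p(l)
  suffices hkey : (q ^ l - 1).factorization p ≤ (q - 1).factorization p + l.factorization p by
    omega
  haveI : Fact p.Prime := ⟨hp⟩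
  by_cases hp2 : p = 2
  · subst hp2
    rcases Nat.even_or_odd l with hle | hlo
    · -- l even: use LTE for 2
      have h4m : 4 ∣ m := by
        obtain ⟨l', rfl⟩ := hle.two_dvd
        obtain ⟨k', rfl⟩ := hpk
        rw [hmlk]; ring_nf; omega
      have h4q : 4 ∣ q - 1 := h4 h4m
      have hq1l : (1:ℕ) < q := by omega
      have h2q1 : 2 ∣ q - 1 := dvd_trans (by norm_num) h4q
      have hlte := padicValNat.pow_two_sub_pow (x := q) (y := 1) hq1l
        (by simpa using h2q1) (by simpa [Nat.two_dvd_ne_zero] using Nat.odd_iff.mp hqodd)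
        hl0 hle
      simp only [one_pow] at hlte
      have hv2q1 : padicValNat 2 (q + 1) = 1 := by
        have h2 : 2 ∣ q + 1 := by
          rcases hqodd with ⟨t, rfl⟩; omega
        have h4' : ¬ (2:ℕ) ^ 2 ∣ q + 1 := by
          intro h
          have : (4:ℕ) ∣ (q + 1) - (q - 1) := Nat.dvd_sub (by norm_num at h ⊢; exact h) h4q
          simp [show q + 1 - (q - 1) = 2 by omega] at this
        have hle1 : 1 ≤ padicValNat 2 (q + 1) := by
          have h2' : (2:ℕ) ^ 1 ∣ q + 1 := by simpa using h2
          have := (Nat.Prime.pow_dvd_iff_le_factorization Nat.prime_two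
            (show q + 1 ≠ 0 by omega)).mp h2'
          rwa [Nat.factorization_def _ Nat.prime_two] at this
        have hle2 : padicValNat 2 (q + 1) < 2 := by
          by_contra hc
          push_neg at hc
          refine h4' ((Nat.Prime.pow_dvd_iff_le_factorization Nat.prime_two
            (show q + 1 ≠ 0 by omega)).mpr ?_)
          rwa [Nat.factorization_def _ Nat.prime_two]
        omega
      rw [Nat.factorization_def _ Nat.prime_two, Nat.factorization_def _ Nat.prime_two,
        Nat.factorization_def _ Nat.prime_two]
      omega
    · -- l odd : q^l - 1 = (q-1) * S with S odd
      obtain ⟨y, hy⟩ : ∃ y, q = y + 1 := ⟨q - 1, by omega⟩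
      set S := (Finset.range l).sum (q ^ ·) with hS
      have hy1 : q - 1 = y := by omega
      have hfac : q ^ l - 1 = (q - 1) * S := by
        have hg := geom_aux y l
        rw [← hy] at hg
        rw [hy1]
        simp only [hS]
        omega
      have hSodd : Odd S := sum_odd q l hqodd hlo
      set c := (q ^ l - 1).factorization 2 with hc
      have hdvd : (2:ℕ) ^ c ∣ q ^ l - 1 := hc ▸ Nat.ordProj_dvd _ _
      rw [hfac] at hdvd
      have hcop2 : Nat.Coprime ((2:ℕ) ^ c) S := by
        refine Nat.Coprime.pow_left _ ?_
        rw [Nat.Prime.coprime_iff_not_dvd Nat.prime_two]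
        have := Nat.odd_iff.mp hSodd
        omega
      have hdvd' : (2:ℕ) ^ c ∣ q - 1 := hcop2.dvd_of_dvd_mul_right hdvd
      have := (Nat.Prime.pow_dvd_iff_le_factorization Nat.prime_two hq10).mp hdvd'
      omega
  · -- p odd prime: LTE
    have hpodd : Odd p := hp.odd_of_ne_two hp2
    have hlte := padicValNat.pow_sub_pow (p := p) (x := q) (y := 1) hpodd
      (by omega) (by simpa using hpq1) hpq hl0
    simp only [one_pow] at hlte
    rw [Nat.factorization_def _ hp, Nat.factorization_def _ hp, Nat.factorization_def _ hp]
    omega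

/-- For each `i ∈ {0, …, l-1}` there exist `α_i ∈ {0, …, l-1}` and `r_i ≥ 0` with
`q^{α_i} = (ik+1) + r_i·m` and `θ^{q^{α_i}} = a^{r_i}·θ^{ik+1}`. -/
theorem root_pow_q_pow_alpha
    (F : Type*) [Field F] [Fintype F] (q m : ℕ)
    (hq : Fintype.card F = q)
    (hodd : ∃ p n : ℕ, p.Prime ∧ Odd p ∧ q = p ^ n)
    (hq5 : 5 ≤ q)
    (hm2 : 2 ≤ m)
    (hmndvd : ¬ m ∣ (q - 1))
    (hprime : ∀ p : ℕ, p.Prime → p ∣ m → p ∣ (q - 1))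
    (h4 : 4 ∣ m → 4 ∣ (q - 1))
    (l k : ℕ)
    (hl : l = orderOf ((q : ZMod m)))
    (hldvd : l ∣ m)
    (hk : k = m / l)
    (a : F) (ha : a ≠ 0)
    (hirr : Irreducible (X ^ m - C a : Polynomial F)) :
    ∀ i < l, ∃ α < l, ∃ r : ℕ,
      q ^ α = (i * k + 1) + r * m ∧
      AdjoinRoot.root (X ^ m - C a : Polynomial F) ^ (q ^ α) =
        AdjoinRoot.of (X ^ m - C a : Polynomial F) (a ^ r) *
          AdjoinRoot.root (X ^ m - C a : Polynomial F) ^ (i * k + 1) := by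
  intro i hi
  have hm0 : m ≠ 0 := by omega
  have hqodd : Odd q := by
    obtain ⟨p, n, hp, hpodd, rfl⟩ := hodd
    exact hpodd.pow
  -- coprimality of q and m
  have hcop : Nat.Coprime q m := by
    by_contra hc
    obtain ⟨p, hp, hpq, hpm⟩ := Nat.Prime.not_coprime_iff_dvd.mp hc
    have hpq1 := hprime p hp hpm
    have : p ∣ 1 := by
      have := Nat.dvd_sub hpq hpq1
      simpa [show q - (q - 1) = 1 by omega] using this
    exact hp.one_lt.ne' (Nat.dvd_one.mp this)
  have hl0 : l ≠ 0 := by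
    rintro rfl
    exact hm0 (Nat.eq_zero_of_zero_dvd hldvd)
  have hmlk : m = l * k := by rw [hk, Nat.mul_div_cancel' hldvd]
  -- l < m
  have hlltm : l < m := by
    have htot : (q : ZMod m) ^ (Nat.totient m) = 1 := by
      have := Nat.ModEq.pow_totient hcop
      have h2 := (ZMod.natCast_eq_natCast_iff _ _ _).mpr this
      push_cast at h2
      exact h2
    have hdvd : l ∣ Nat.totient m := hl ▸ orderOf_dvd_of_pow_eq_one htot
    have := Nat.le_of_dvd (Nat.totient_pos.mpr (by omega)) hdvd
    have := Nat.totient_lt m (by omega)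
    omega
  have hk2 : 2 ≤ k := by
    have hk0' : k ≠ 0 := fun h => by simp [h] at hmlk; omega
    have hk1' : k ≠ 1 := fun h => by simp [h] at hmlk; omega
    omega
  -- m ∣ q^l - 1
  have hql1 : 1 < q ^ l := Nat.one_lt_pow hl0 (by omega)
  have hml : m ∣ q ^ l - 1 := by
    have hpow : (q : ZMod m) ^ l = 1 := hl ▸ pow_orderOf_eq_one _
    have : ((q ^ l : ℕ) : ZMod m) = ((1 : ℕ) : ZMod m) := by push_cast; simpa using hpow
    have hmeq : (1 : ℕ) ≡ q ^ l [MOD m] := ((ZMod.natCast_eq_natCast_iff _ _ _).mp this).symm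
    exact (Nat.modEq_iff_dvd' (by omega)).mp hmeq
  -- k ∣ q - 1
  have hkq1 : k ∣ q - 1 := key_dvd q m l k hq5 hqodd hm0 hl0 hmlk hcop hprime h4 hml
  -- residues q^α mod m are of the form 1 + j k
  have Hmod : ∀ α : ℕ, q ^ α % m = 1 + ((q ^ α % m - 1) / k) * k ∧ (q ^ α % m - 1) / k < l := by
    intro α
    have hne0 : q ^ α % m ≠ 0 := by
      intro h
      have hdvd : m ∣ q ^ α := Nat.dvd_of_mod_eq_zero h
      have : m = 1 := Nat.Coprime.eq_one_of_dvd ((hcop.pow_left α).symm) hdvd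
      omega
    have hq1k : (1 : ℕ) ≡ q [MOD k] := (Nat.modEq_iff_dvd' (by omega)).mpr hkq1
    have hqak : (1 : ℕ) ≡ q ^ α [MOD k] := by simpa using hq1k.pow α
    have hmodk : q ^ α % m ≡ q ^ α [MOD k] :=
      Nat.ModEq.of_dvd (hmlk ▸ Dvd.dvd.mul_left (dvd_refl k) l) (Nat.mod_modEq _ m)
    have h1mod : (1 : ℕ) ≡ q ^ α % m [MOD k] := hqak.trans hmodk.symm
    have hkdvd : k ∣ q ^ α % m - 1 := (Nat.modEq_iff_dvd' (by omega)).mp h1mod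
    have hdiv : ((q ^ α % m - 1) / k) * k = q ^ α % m - 1 := Nat.div_mul_cancel hkdvd
    have hlt : q ^ α % m < m := Nat.mod_lt _ (by omega)
    constructor
    · omega
    · have : ((q ^ α % m - 1) / k) * k < l * k := by rw [hdiv]; omega
      exact lt_of_mul_lt_mul_right this (Nat.zero_le k)
  -- injectivity of α ↦ q^α mod m on range l
  have horder : ∀ α β : ℕ, α < l → β < l → q ^ α % m = q ^ β % m → α = β := by
    intro α β hα hβ h
    have hz : (q : ZMod m) ^ α = (q : ZMod m) ^ β := by
      have : ((q ^ α % m : ℕ) : ZMod m) = ((q ^ β % m : ℕ) : ZMod m) := by rw [h]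
      rwa [ZMod.natCast_mod, ZMod.natCast_mod, Nat.cast_pow, Nat.cast_pow] at this
    exact pow_injOn_Iio_orderOf (by simpa [← hl] using hα) (by simpa [← hl] using hβ) hz
  -- pigeonhole
  let g : Fin l → Fin l := fun α => ⟨(q ^ (α : ℕ) % m - 1) / k, (Hmod α).2⟩
  have hginj : Function.Injective g := by
    intro α β hgab
    have hj : (q ^ (α : ℕ) % m - 1) / k = (q ^ (β : ℕ) % m - 1) / k := Fin.mk.inj_iff.mp hgab
    have h1 := (Hmod α).1
    have h2 := (Hmod β).1
    exact Fin.ext (horder α β α.isLt β.isLt (by rw [h1, h2, hj]))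
  have hgsurj : Function.Surjective g := Finite.surjective_of_injective hginj
  obtain ⟨α, hα⟩ := hgsurj ⟨i, hi⟩
  have hjα : (q ^ (α : ℕ) % m - 1) / k = i := congrArg Fin.val hα
  have hres : q ^ (α : ℕ) % m = 1 + i * k := by
    have := (Hmod α).1
    rw [hjα] at this
    exact this
  set r := q ^ (α : ℕ) / m with hr
  have hpow : q ^ (α : ℕ) = (i * k + 1) + r * m := by
    have hd := Nat.div_add_mod (q ^ (α : ℕ)) m
    rw [hres, mul_comm m r] at hd
    omega
  clear_value r
  refine ⟨α, α.isLt, r, hpow, ?_⟩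
  · 
    set f : Polynomial F := X ^ m - C a with hf
    have hroot : (AdjoinRoot.root f) ^ m = AdjoinRoot.of f a := by
      have h0 := AdjoinRoot.mk_self (f := f)
      rw [hf] at h0
      rw [map_sub, map_pow, AdjoinRoot.mk_X, AdjoinRoot.mk_C, sub_eq_zero] at h0
      rw [← hf] at h0
      exact h0
    rw [hpow, pow_add, pow_mul', hroot, ← map_pow, mul_comm]
end

section
/- Let q be a power of an odd prime with q ≥ 5, let m ≥ 2 be an integer that does not divide q−1 and such that every prime factor of m divides q−1 and, if 4 divides m, then 4 divides q−1. Let l = ord_m(q), assume l divides m, set k = m/l, and assume k divides q−1 and gcd((q−1)/k, l) = 1. Let t = (q^l − 1)/m. Then l divides q^{l−1} + q^{l−2} + … + q + 1, the equality t = [(q−1)/k]·[(q^{l−1} + … + q + 1)/l] holds, and the additive order of t modulo q−1 equals k, i.e., gcd(t, q−1) = (q−1)/k. -/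
open Finset

/-!
Write `S = ∑_{i<l} q^i = (q^l - 1)/(q - 1)`. Since `q ≡ 1` modulo every prime `p ∣ m`, we get
`S ≡ l (mod p)`, and multiplicativity of geometric sums (`S_{ab}(q) = S_a(q) S_b(q^a)`) upgrades
this to `l ∣ S`. Lifting the exponent gives `v_p(S) = v_p(l)` for every prime `p ∣ k`: for odd
`p` directly, and for `p = 2` because either `l` is odd (so `S` is odd) or `4 ∣ k l = m`, whence
`4 ∣ q - 1`. Hence `S / l` is coprime to `k`, `t = ((q - 1)/k)(S/l)`, and
`gcd(t, q - 1) = ((q - 1)/k) · gcd(S/l, k) = (q - 1)/k`.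
-/

theorem geom_sum_range_mul {R : Type*} [CommSemiring R] (x : R) (a b : ℕ) :
    ∑ i ∈ range (a * b), x ^ i = (∑ i ∈ range a, x ^ i) * ∑ j ∈ range b, (x ^ a) ^ j := by
  induction b with
  | zero => simp
  | succ b ih =>
    rw [Nat.mul_succ, sum_range_add, ih, geom_sum_succ', mul_add, add_comm]
    simp only [pow_add, ← mul_sum, ← pow_mul]
    ring

namespace Nat

theorem geom_sum_modEq {n q : ℕ} (h : q ≡ 1 [MOD n]) (l : ℕ) :
    ∑ i ∈ range l, q ^ i ≡ l [MOD n] :=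
  calc ∑ i ∈ range l, q ^ i ≡ ∑ _i ∈ range l, 1 [MOD n] :=
        ModEq.sum fun i _ => by simpa using h.pow i
    _ = l := by simp

theorem dvd_geom_sum {q l : ℕ} (hq : ∀ p, p.Prime → p ∣ l → q ≡ 1 [MOD p]) :
    l ∣ ∑ i ∈ range l, q ^ i := by
  induction l using induction_on_primes generalizing q with
  | zero => simp
  | one => simp
  | prime_mul p a hp ih =>
    rw [geom_sum_range_mul]
    refine mul_dvd_mul ?_ (ih fun r hr hra => ?_)
    · exact ((geom_sum_modEq (hq p hp (dvd_mul_right p a)) p).dvd_iff dvd_rfl).mpr dvd_rfl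
    · simpa using (hq r hr (dvd_mul_of_dvd_right hra p)).pow p

theorem padicValNat_geom_sum {p q l : ℕ} [hp : Fact p.Prime] (hq : 1 < q) (hpq : p ∣ q - 1)
    (hl : l ≠ 0) (h2 : p = 2 → Even l → 4 ∣ q - 1) :
    padicValNat p (∑ i ∈ range l, q ^ i) = padicValNat p l := by
  have hq1 : q ≡ 1 [MOD p] := ((modEq_iff_dvd' hq.le).mpr hpq).symm
  by_cases hpl : p ∣ l
  swap
  · rw [padicValNat.eq_zero_of_not_dvd hpl, padicValNat.eq_zero_of_not_dvd]
    exact fun hS => hpl (((geom_sum_modEq hq1 l).dvd_iff dvd_rfl).mp hS)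
  have hpq' : ¬ p ∣ q := fun h =>
    hp.out.not_dvd_one (by simpa [Nat.sub_sub_self hq.le] using Nat.dvd_sub h hpq)
  have hsplit : padicValNat p (q ^ l - 1) =
      padicValNat p (q - 1) + padicValNat p (∑ i ∈ range l, q ^ i) := by
    rw [← geom_sum_mul_of_one_le hq.le l, mul_comm, padicValNat.mul (by omega)
      (geom_sum_pos (zero_le q) hl).ne']
  rcases hp.out.eq_two_or_odd' with rfl | hodd
  · have hl2 : Even l := even_iff_two_dvd.mpr hpl
    have h4 := h2 rfl hl2
    have hlte := padicValNat.pow_two_sub_one hq (by omega) hl hl2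
    have hq2 : padicValNat 2 (q + 1) = 1 := by
      have hge := (padicValNat_dvd_iff_le (p := 2) (n := 1) (by omega : q + 1 ≠ 0)).mp (by omega)
      have hlt : ¬ 2 ≤ padicValNat 2 (q + 1) := fun h =>
        absurd ((padicValNat_dvd_iff_le (by omega : q + 1 ≠ 0)).mpr h) (by omega)
      omega
    omega
  · have hlte := padicValNat.pow_sub_pow (y := 1) hodd hq (by simpa using hpq) hpq' hl
    simp only [one_pow] at hlte
    omega

theorem coprime_geom_sum_div {q l k : ℕ} (hq : 1 < q) (hl : l ≠ 0) (hkq : k ∣ q - 1)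
    (hlS : l ∣ ∑ i ∈ range l, q ^ i) (h2 : 2 ∣ k → Even l → 4 ∣ q - 1) :
    Coprime ((∑ i ∈ range l, q ^ i) / l) k := by
  refine coprime_of_dvd fun p hp hpu hpk => ?_
  have := Fact.mk hp
  have hv := padicValNat_geom_sum hq (hpk.trans hkq) hl fun hp2 => h2 (hp2 ▸ hpk)
  obtain ⟨u, hu⟩ := hlS
  have hu0 : u ≠ 0 := by
    rintro rfl
    exact (geom_sum_pos (zero_le q) hl).ne' (by simpa using hu)
  rw [hu, Nat.mul_div_cancel_left _ (pos_of_ne_zero hl)] at hpu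
  rw [hu, padicValNat.mul hl hu0] at hv
  have := one_le_padicValNat_of_dvd hu0 hpu
  omega

end Nat

theorem t_structure_and_additive_order_general
    (q m : ℕ)
    (hq5 : 5 ≤ q)
    (hm2 : 2 ≤ m)
    (hprime : ∀ p : ℕ, p.Prime → p ∣ m → p ∣ (q - 1))
    (h4 : 4 ∣ m → 4 ∣ (q - 1))
    (l k t : ℕ)
    (hldvd : l ∣ m)
    (hk : k = m / l)
    (hkdvd : k ∣ (q - 1))
    (ht : t = (q ^ l - 1) / m) :
    l ∣ (∑ i ∈ Finset.range l, q ^ i) ∧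
    t = ((q - 1) / k) * ((∑ i ∈ Finset.range l, q ^ i) / l) ∧
    addOrderOf ((t : ZMod (q - 1))) = k ∧
    Nat.gcd t (q - 1) = (q - 1) / k := by
  set S := ∑ i ∈ range l, q ^ i
  have hq : 1 < q := by omega
  have hl : l ≠ 0 := by rintro rfl; omega
  have hkl : k * l = m := hk ▸ Nat.div_mul_cancel hldvd
  have hlS : l ∣ S := Nat.dvd_geom_sum fun p hp hpl =>
    ((Nat.modEq_iff_dvd' hq.le).mpr (hprime p hp (hpl.trans hldvd))).symm
  have hcop : Nat.Coprime (S / l) k := Nat.coprime_geom_sum_div hq hl hkdvd hlS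
    fun h2k h2l => h4 (hkl ▸ mul_dvd_mul h2k (even_iff_two_dvd.mp h2l))
  have ht' : t = (q - 1) / k * (S / l) := by
    rw [ht, ← hkl, ← geom_sum_mul_of_one_le hq.le, mul_comm, Nat.div_mul_div_comm hkdvd hlS]
  have hgcd : Nat.gcd t (q - 1) = (q - 1) / k :=
    calc Nat.gcd t (q - 1) = Nat.gcd ((q - 1) / k * (S / l)) ((q - 1) / k * k) := by
          rw [ht', Nat.div_mul_cancel hkdvd]
      _ = (q - 1) / k := by rw [Nat.gcd_mul_left, hcop.gcd_eq_one, mul_one]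
  refine ⟨hlS, ht', ?_, hgcd⟩
  rw [ZMod.addOrderOf_coe t (by omega), Nat.gcd_comm, hgcd, Nat.div_div_self hkdvd (by omega)]

/-- With `l = ord_m q`, `k = m/l`, `t = (q^l - 1)/m`: `l` divides `q^{l-1} + … + q + 1`,
`t = [(q-1)/k]·[(q^{l-1} + … + q + 1)/l]`, and the additive order of `t` modulo `q - 1`
equals `k`, i.e. `gcd(t, q-1) = (q-1)/k`. -/
theorem t_structure_and_additive_order
    (q m : ℕ)
    (hodd : ∃ p n : ℕ, p.Prime ∧ Odd p ∧ q = p ^ n)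
    (hq5 : 5 ≤ q)
    (hm2 : 2 ≤ m)
    (hmndvd : ¬ m ∣ (q - 1))
    (hprime : ∀ p : ℕ, p.Prime → p ∣ m → p ∣ (q - 1))
    (h4 : 4 ∣ m → 4 ∣ (q - 1))
    (l k t : ℕ)
    (hl : l = orderOf ((q : ZMod m)))
    (hldvd : l ∣ m)
    (hk : k = m / l)
    (hkdvd : k ∣ (q - 1))
    (hcop : Nat.Coprime ((q - 1) / k) l)
    (ht : t = (q ^ l - 1) / m) :
    l ∣ (∑ i ∈ Finset.range l, q ^ i) ∧
    t = ((q - 1) / k) * ((∑ i ∈ Finset.range l, q ^ i) / l) ∧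
    addOrderOf ((t : ZMod (q - 1))) = k ∧
    Nat.gcd t (q - 1) = (q - 1) / k :=
  t_structure_and_additive_order_general q m hq5 hm2 hprime h4 l k t hldvd hk hkdvd ht
end

section
/- Let q be a power of an odd prime with q ≥ 5, let m ≥ 2 be an integer that does not divide q−1 and such that every prime factor of m divides q−1 and, if 4 divides m, then 4 divides q−1. Let l = ord_m(q), assume l divides m and set k = m/l and t = (q^l − 1)/m. Let a ∈ F_q have multiplicative order e = ∏_{p prime, p ∣ m} p^{v_p(q−1)}, assume x^m − a is irreducible over F_q, and let θ be the image of x in F_{q^m} = F_q[x]/(x^m − a). Then for every non-zero b ∈ F_q, the k elements a^{jt}·θ + b for j = 0, 1, …, k−1 are pairwise distinct and all belong to the cyclic subgroup of F_{q^m}^* generated by θ + b. -/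
open Polynomial


/-- geometric sum identity in ℕ -/
lemma nat_geom (q l : ℕ) (hq : 1 ≤ q) :
    (q - 1) * ∑ i ∈ Finset.range l, q ^ i = q ^ l - 1 := by
  induction l with
  | zero => simp
  | succ n ih =>
    rw [Finset.sum_range_succ, Nat.mul_add, ih]
    have h1 : 1 ≤ q ^ n := Nat.one_le_pow _ _ hq
    have h2 : q ^ n ≤ q ^ (n+1) := Nat.pow_le_pow_right hq (by omega)
    have : (q - 1) * q ^ n = q ^ (n+1) - q ^ n := by
      rw [Nat.sub_mul, one_mul, ← pow_succ']
    omega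

lemma nt_key (q m l t d : ℕ) (hq5 : 5 ≤ q) (hqodd : Odd q)
    (hm2 : 2 ≤ m)
    (hprime : ∀ p : ℕ, p.Prime → p ∣ m → p ∣ (q - 1))
    (h4 : 4 ∣ m → 4 ∣ (q - 1))
    (hl0 : 0 < l) (hldvd : l ∣ m)
    (hmt : q ^ l - 1 = m * t)
    (he : (∏ p ∈ m.primeFactors, p ^ (q - 1).factorization p) ∣ d * t) :
    m / l ∣ d := by
  rcases eq_or_ne d 0 with rfl | hd0
  · exact dvd_zero _
  set e := ∏ p ∈ m.primeFactors, p ^ (q - 1).factorization p with hedef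
  have hm0 : m ≠ 0 := by omega
  have hql : q ≤ q ^ l := Nat.le_self_pow (by omega) q
  have hQl0 : q ^ l - 1 ≠ 0 := by omega
  have ht0 : t ≠ 0 := by rintro rfl; omega
  have hk0 : m / l ≠ 0 := Nat.ne_of_gt (Nat.div_pos (Nat.le_of_dvd (by omega) hldvd) hl0)
  have he0 : e ≠ 0 := Finset.prod_ne_zero_iff.mpr fun p hp =>
    pow_ne_zero _ (Nat.Prime.ne_zero (Nat.prime_of_mem_primeFactors hp))
  rw [← Nat.factorization_le_iff_dvd hk0 hd0]
  rw [Finsupp.le_def]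
  intro p
  by_cases hpk : p ∈ (m / l).primeFactors
  swap
  · have : (m/l).factorization p = 0 := by
      rw [← Nat.support_factorization] at hpk
      exact Finsupp.notMem_support_iff.mp hpk
    omega
  have hp : p.Prime := Nat.prime_of_mem_primeFactors hpk
  have hpdk : p ∣ m / l := Nat.dvd_of_mem_primeFactors hpk
  have hpm : p ∣ m := hpdk.trans (Nat.div_dvd_of_dvd hldvd)
  have hpq1 : p ∣ q - 1 := hprime p hp hpm
  -- LTE upper bound
  have hLTE : (q ^ l - 1).factorization p ≤ (q - 1).factorization p + l.factorization p := by
    by_cases hp2 : p = 2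
    · subst hp2
      by_cases hle : Even l
      · -- then 4 ∣ m so 4 ∣ q - 1
        have h2k : 2 ∣ m / l := hpdk
        have h2l : 2 ∣ l := hle.two_dvd
        have h4m : 4 ∣ m := by
          obtain ⟨c, hc⟩ := h2k
          obtain ⟨c', hc'⟩ := h2l
          have : m = l * (m / l) := (Nat.mul_div_cancel' hldvd).symm
          rw [hc, hc'] at this
          exact ⟨c' * c, by rw [this]; ring⟩
        have h4q : 4 ∣ q - 1 := h4 h4m
        have h2q : ¬ 2 ∣ q := by
          rw [Nat.two_dvd_ne_zero]; exact Nat.odd_iff.mp hqodd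
        have key := padicValNat.pow_two_sub_pow (x := q) (y := 1) (by omega)
          (by omega) h2q (n := l) (by omega) hle
        simp only [one_pow, pow_one] at key
        have hval : padicValNat 2 (q + 1) = 1 := by
          have h2 : 2 ∣ q + 1 := by omega
          have h4' : ¬ 4 ∣ q + 1 := by omega
          have : padicValNat 2 (q+1) < 2 := by
            by_contra hcon
            push_neg at hcon
            have := pow_padicValNat_dvd (p := 2) (n := q + 1)
            have h4d : 2^2 ∣ q + 1 := dvd_trans (pow_dvd_pow 2 hcon) this
            norm_num at h4d
            exact h4' h4d
          have hge : 1 ≤ padicValNat 2 (q+1) :=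
            one_le_padicValNat_of_dvd (by omega) h2
          omega
        rw [Nat.factorization_def _ hp, Nat.factorization_def _ hp, Nat.factorization_def _ hp]
        omega
      · -- l odd : v_2(q^l - 1) = v_2(q-1)
        have hlodd : l % 2 = 1 := Nat.odd_iff.mp (Nat.odd_iff.mpr (by
          rcases Nat.even_or_odd l with h | h
          · exact absurd h hle
          · exact Nat.odd_iff.mp h))
        set S := ∑ i ∈ Finset.range l, q ^ i with hS
        have hgeo : (q - 1) * S = q ^ l - 1 := nat_geom q l (by omega)
        have hSmod : S % 2 = 1 := by
          rw [hS, Finset.sum_nat_mod]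
          have : ∀ i ∈ Finset.range l, q ^ i % 2 = 1 := fun i _ =>
            Nat.odd_iff.mp (hqodd.pow)
          rw [Finset.sum_congr rfl this]
          simp [Finset.sum_const, hlodd]
        have hSodd : ¬ 2 ∣ S := by omega
        have hS0 : S ≠ 0 := by omega
        rw [← hgeo, Nat.factorization_mul (by omega) hS0]
        simp only [Finsupp.coe_add, Pi.add_apply]
        rw [Nat.factorization_eq_zero_of_not_dvd hSodd]
        omega
    · -- odd p
      have hpodd : Odd p := hp.odd_of_ne_two hp2
      haveI : Fact p.Prime := ⟨hp⟩
      have hpq : ¬ p ∣ q := by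
        intro hc
        have h1 := Nat.dvd_sub hc hpq1
        rw [show q - (q - 1) = 1 by omega] at h1
        have := Nat.dvd_one.mp h1
        exact hp.one_lt.ne' this
      have := padicValNat.pow_sub_pow (p := p) hpodd (x := q) (y := 1) (by omega)
        (by simpa using hpq1) hpq (n := l) (by omega)
      simp only [one_pow, pow_one] at this
      rw [Nat.factorization_def _ hp, Nat.factorization_def _ hp, Nat.factorization_def _ hp]
      omega
  -- arithmetic combination
  have h1 : (q ^ l - 1).factorization = m.factorization + t.factorization := by
    rw [hmt]; exact Nat.factorization_mul hm0 ht0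
  have h2 : m.factorization = l.factorization + (m / l).factorization := by
    conv_lhs => rw [← Nat.mul_div_cancel' hldvd]
    exact Nat.factorization_mul (by omega) hk0
  have h3 : (q - 1).factorization p ≤ e.factorization p := by
    have hdvd : p ^ (q - 1).factorization p ∣ e :=
      Finset.dvd_prod_of_mem _ (Nat.mem_primeFactors.mpr ⟨hp, hpm, hm0⟩)
    exact (Nat.Prime.pow_dvd_iff_le_factorization hp he0).mp hdvd
  have h4' : e.factorization p ≤ d.factorization p + t.factorization p := by
    have := (Nat.factorization_le_iff_dvd he0 (Nat.mul_ne_zero hd0 ht0)).mpr he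
    have := Finsupp.le_def.mp this p
    rwa [Nat.factorization_mul hd0 ht0] at this
  have e1 : (q ^ l - 1).factorization p = m.factorization p + t.factorization p := by
    rw [h1]; rfl
  have e2 : m.factorization p = l.factorization p + (m / l).factorization p := by
    rw [h2]; rfl
  omega


/-- The `k` elements `a^{jt}·θ + b`, `j = 0, …, k-1`, are pairwise distinct and lie in
the cyclic subgroup generated by `θ + b`. -/
theorem linear_binomials_in_subgroup
    (F : Type*) [Field F] [Fintype F] (q m : ℕ)
    (hq : Fintype.card F = q)
    (hodd : ∃ p n : ℕ, p.Prime ∧ Odd p ∧ q = p ^ n)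
    (hq5 : 5 ≤ q)
    (hm2 : 2 ≤ m)
    (hmndvd : ¬ m ∣ (q - 1))
    (hprime : ∀ p : ℕ, p.Prime → p ∣ m → p ∣ (q - 1))
    (h4 : 4 ∣ m → 4 ∣ (q - 1))
    (l k t : ℕ)
    (hl : l = orderOf ((q : ZMod m)))
    (hldvd : l ∣ m)
    (hk : k = m / l)
    (ht : t = (q ^ l - 1) / m)
    (a : F)
    (ha : orderOf a = ∏ p ∈ m.primeFactors, p ^ (q - 1).factorization p)
    (hirr : Irreducible (X ^ m - C a : Polynomial F))
    (b : F) (hb : b ≠ 0) :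
    Function.Injective (fun j : Fin k =>
      AdjoinRoot.of (X ^ m - C a : Polynomial F) (a ^ ((j : ℕ) * t)) *
        AdjoinRoot.root (X ^ m - C a : Polynomial F) +
        AdjoinRoot.of (X ^ m - C a : Polynomial F) b) ∧
    ∀ j : Fin k,
      (AdjoinRoot.of (X ^ m - C a : Polynomial F) (a ^ ((j : ℕ) * t)) *
        AdjoinRoot.root (X ^ m - C a : Polynomial F) +
        AdjoinRoot.of (X ^ m - C a : Polynomial F) b)
        ∈ Submonoid.powers (AdjoinRoot.root (X ^ m - C a : Polynomial F)
          + AdjoinRoot.of (X ^ m - C a : Polynomial F) b) := by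
  haveI hF : Fact (Irreducible (X ^ m - C a : Polynomial F)) := ⟨hirr⟩
  set f : Polynomial F := X ^ m - C a with hf
  have hm0 : 0 < m := by omega
  -- characteristic
  obtain ⟨p, n, hp, hpodd, hqpn⟩ := hodd
  have hqodd : Odd q := hqpn ▸ hpodd.pow
  have hn0 : n ≠ 0 := by rintro rfl; rw [pow_zero] at hqpn; omega
  obtain ⟨c, hc⟩ := CharP.exists F
  haveI := hc
  have hcprime : c.Prime := CharP.char_is_prime F c
  obtain ⟨n', hcard⟩ := FiniteField.card F c
  have hpc : p = c := by
    have hd : p ∣ c ^ (n' : ℕ) := by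
      rw [← hcard.2, hq, hqpn]; exact dvd_pow_self p hn0
    exact (Nat.prime_dvd_prime_iff_eq hp hcprime).mp (hp.dvd_of_dvd_pow hd)
  subst hpc
  haveI hfp : Fact p.Prime := ⟨hp⟩
  haveI hKchar : CharP (AdjoinRoot f) p :=
    charP_of_injective_ringHom (AdjoinRoot.of f).injective p
  -- root^m = a
  have hroot : (AdjoinRoot.root f) ^ m = AdjoinRoot.of f a := by
    have h0 : AdjoinRoot.mk f (X ^ m - C a) = 0 := AdjoinRoot.mk_self
    rw [map_sub, map_pow, AdjoinRoot.mk_X, AdjoinRoot.mk_C, sub_eq_zero] at h0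
    exact h0
  -- a ≠ 0, root ≠ 0
  have he1 : 1 ≤ orderOf a := by
    rw [ha]
    exact Nat.one_le_iff_ne_zero.mpr (Finset.prod_ne_zero_iff.mpr fun p hp =>
      pow_ne_zero _ (Nat.Prime.ne_zero (Nat.prime_of_mem_primeFactors hp)))
  have ha0 : a ≠ 0 := by
    rintro rfl
    have h1 := pow_orderOf_eq_one (0 : F)
    rw [zero_pow (by omega)] at h1
    exact zero_ne_one h1
  have hθ0 : AdjoinRoot.root f ≠ 0 := by
    intro h
    rw [h, zero_pow hm0.ne'] at hroot
    exact ha0 ((_root_.map_eq_zero (AdjoinRoot.of f)).mp hroot.symm)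
  -- m ∣ q^l - 1
  have hql1 : (q : ZMod m) ^ l = 1 := by rw [hl]; exact pow_orderOf_eq_one _
  have hqlge : 1 ≤ q ^ l := Nat.one_le_pow _ _ (by omega)
  have hmd : m ∣ q ^ l - 1 := by
    have hcast : ((q ^ l : ℕ) : ZMod m) = ((1 : ℕ) : ZMod m) := by push_cast; simpa using hql1
    exact (Nat.modEq_iff_dvd' hqlge).mp ((ZMod.natCast_eq_natCast_iff _ _ _).mp hcast).symm
  have hmt : q ^ l - 1 = m * t := by rw [ht]; exact (Nat.mul_div_cancel' hmd).symm
  -- l positive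
  have hqm : Nat.Coprime q m := by
    by_contra hcon
    obtain ⟨r, hr, hrd⟩ := Nat.exists_prime_and_dvd hcon
    have hrq : r ∣ q := hrd.trans (Nat.gcd_dvd_left _ _)
    have hrm : r ∣ m := hrd.trans (Nat.gcd_dvd_right _ _)
    have h1 := Nat.dvd_sub hrq (hprime r hr hrm)
    rw [show q - (q - 1) = 1 by omega] at h1
    exact hr.one_lt.ne' (Nat.dvd_one.mp h1)
  haveI : NeZero m := ⟨by omega⟩
  have hl0 : 0 < l := by
    rw [hl, orderOf_pos_iff, isOfFinOrder_iff_pow_eq_one]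
    refine ⟨Nat.totient m, Nat.totient_pos.mpr (by omega), ?_⟩
    have := ZMod.pow_totient (ZMod.unitOfCoprime q hqm)
    have h2 := congrArg (Units.val) this
    rw [Units.val_pow_eq_pow_val, ZMod.coe_unitOfCoprime] at h2
    simpa using h2
  -- powers of field elements
  have hq1pow : ∀ (c0 : F) (s : ℕ), c0 ^ (q ^ s) = c0 := by
    intro c0 s; rw [← hq]; exact FiniteField.pow_card_pow s c0
  have hadd : ∀ (x y : AdjoinRoot f) (s : ℕ), (x + y) ^ q ^ s = x ^ q ^ s + y ^ q ^ s := by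
    intro x y s
    have hs : q ^ s = p ^ (n * s) := by rw [hqpn, ← pow_mul]
    rw [hs]
    exact add_pow_char_pow x y p (n * s)
  -- key power computation
  have hstep : (AdjoinRoot.root f) ^ (q ^ l) = AdjoinRoot.of f (a ^ t) * AdjoinRoot.root f := by
    have hql : q ^ l = m * t + 1 := by omega
    rw [hql, pow_succ, pow_mul, hroot, ← map_pow]
  have hθpow : ∀ j : ℕ,
      (AdjoinRoot.root f) ^ (q ^ (l * j)) = AdjoinRoot.of f (a ^ (j * t)) * AdjoinRoot.root f := by
    intro j
    induction j with
    | zero => simp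
    | succ j ih =>
      calc (AdjoinRoot.root f) ^ q ^ (l * (j+1))
          = ((AdjoinRoot.root f) ^ q ^ (l * j)) ^ (q ^ l) := by
            rw [← pow_mul, ← pow_add, Nat.mul_succ]
        _ = (AdjoinRoot.of f (a ^ (j*t)) * AdjoinRoot.root f) ^ (q ^ l) := by rw [ih]
        _ = (AdjoinRoot.of f (a ^ (j*t))) ^ (q ^ l) * (AdjoinRoot.root f) ^ (q ^ l) :=
            mul_pow _ _ _
        _ = AdjoinRoot.of f ((a ^ (j*t)) ^ (q ^ l)) * (AdjoinRoot.of f (a ^ t) * AdjoinRoot.root f) := by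
            rw [← map_pow, hstep]
        _ = AdjoinRoot.of f (a ^ ((j+1) * t)) * AdjoinRoot.root f := by
            rw [hq1pow, ← mul_assoc, ← map_mul, ← pow_add,
              show j * t + t = (j+1) * t by ring]
  constructor
  · -- injectivity
    have key : ∀ x y : Fin k, (y : ℕ) ≤ (x : ℕ) →
        a ^ ((x : ℕ) * t) = a ^ ((y : ℕ) * t) → (x : ℕ) ≤ (y : ℕ) := by
      intro x y hyx hxy
      have hmul : (y : ℕ) * t ≤ (x : ℕ) * t := Nat.mul_le_mul_right t hyx
      have hxt : (x : ℕ) * t = (y : ℕ) * t + ((x : ℕ) - (y : ℕ)) * t := by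
        rw [Nat.sub_mul]; omega
      rw [hxt, pow_add] at hxy
      have hcancel : a ^ (((x : ℕ) - (y : ℕ)) * t) = 1 := by
        have := mul_left_cancel₀ (pow_ne_zero ((y : ℕ) * t) ha0)
          (hxy.trans (mul_one _).symm)
        exact this
      have hdvd : orderOf a ∣ ((x : ℕ) - (y : ℕ)) * t := orderOf_dvd_of_pow_eq_one hcancel
      rw [ha] at hdvd
      have hkd : m / l ∣ (x : ℕ) - (y : ℕ) :=
        nt_key q m l t _ hq5 hqodd hm2 hprime h4 hl0 hldvd hmt hdvd
      have hlt : (x : ℕ) - (y : ℕ) < m / l := by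
        have h1 := x.isLt
        omega
      have : (x : ℕ) - (y : ℕ) = 0 := Nat.eq_zero_of_dvd_of_lt hkd hlt
      omega
    intro j1 j2 hEq
    simp only at hEq
    have h1 : AdjoinRoot.of f (a ^ ((j1 : ℕ) * t)) * AdjoinRoot.root f =
        AdjoinRoot.of f (a ^ ((j2 : ℕ) * t)) * AdjoinRoot.root f := by
      exact add_right_cancel hEq
    have h2 : a ^ ((j1 : ℕ) * t) = a ^ ((j2 : ℕ) * t) :=
      (AdjoinRoot.of f).injective (mul_right_cancel₀ hθ0 h1)
    have : (j1 : ℕ) = (j2 : ℕ) := by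
      rcases le_total (j1 : ℕ) (j2 : ℕ) with h | h
      · exact le_antisymm h (key j2 j1 h h2.symm)
      · exact le_antisymm (key j1 j2 h h2) h
    exact Fin.ext this
  · -- membership
    intro j
    refine ⟨q ^ (l * (j : ℕ)), ?_⟩
    simp only
    rw [hadd, hθpow, ← map_pow, hq1pow]
end
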